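/- arXiv:2310.09804 — 5 statements merged into one kernel-verified Lean document; each statement's English description precedes it below -/
import Mathlib

section
/- (Descent Lemma for Byzantine-robust aggregation.) Let x^t, g_i^t (i ∈ 𝒢) and g^t be random vectors with x^{t+1} = x^t − γ g^t, γ > 0, and suppose g^t satisfies the robust-aggregation bound E‖g^t − ḡ^t‖² ≤ cδ · (1/(G(G−1))) Σ_{i,l∈𝒢, i≠l} E‖g_i^t − g_l^t‖², where ḡ^t = (1/G) Σ_{i∈𝒢} g_i^t. Then for every s > 0, with κ = 1 − 8Bcδ(1+s): E[f(x^{t+1})] ≤ E[f(x^t)] − (γκ/2)·E‖∇f(x^t)‖² − (1/(2γ) − L/2)·E‖x^{t+1} − x^t‖² + 4γcδ(1+s)·E[(1/G) Σ_{i∈𝒢} ‖g_i^t − ∇f_i(x^t)‖²] + (γ/2)(1 + s^{−1})·E‖ḡ^t − ∇f(x^t)‖² + 4γcδ(1+s)ζ². -/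
/-!
Smoothness gives the descent inequality
`f (x - γ • g) ≤ f x - γ/2 ‖∇f x‖² - (1/(2γ) - L/2) ‖γ • g‖² + γ/2 ‖g - ∇f x‖²`,
and Young's inequality with weight `s` splits `‖g - ∇f x‖²` into the aggregation error
`‖g - ḡ‖²` and the averaging error `‖ḡ - ∇f x‖²`. The robust-aggregation bound controls the
former by `cδ` times the mean pairwise distance of the honest vectors; routing each pairwise
distance through `∇f_i` and `∇f` costs a factor `8`, and heterogeneity turns the spread of the
`∇f_i` around `∇f` into `B ‖∇f‖² + ζ²`.
-/

open MeasureTheory Finset RealInnerProductSpace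

theorem apply_add_le_of_gradient_lipschitz {F : Type*} [NormedAddCommGroup F]
    [InnerProductSpace ℝ F] [CompleteSpace F] {f : F → ℝ} (hf : Differentiable ℝ f) {L : ℝ}
    (hsmooth : ∀ x y, ‖gradient f x - gradient f y‖ ≤ L * ‖x - y‖) (x v : F) :
    f (x + v) ≤ f x + ⟪gradient f x, v⟫ + L / 2 * ‖v‖ ^ 2 := by
  have hline : ∀ t : ℝ,
      HasDerivAt (fun t : ℝ => f (x + t • v)) ⟪gradient f (x + t • v), v⟫ t := by
    intro t
    rw [inner_gradient_left]
    exact (hf _).hasFDerivAt.comp_hasDerivAt t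
      ((((hasDerivAt_id t).smul_const v).const_add x).congr_deriv (one_smul ℝ v))
  -- `f` minus its quadratic model along the segment; the Lipschitz gradient makes it antitone.
  set h : ℝ → ℝ := fun t => f (x + t • v) - t * ⟪gradient f x, v⟫ - L / 2 * t ^ 2 * ‖v‖ ^ 2
  have hderiv : ∀ t : ℝ, HasDerivAt h
      (⟪gradient f (x + t • v) - gradient f x, v⟫ - L * t * ‖v‖ ^ 2) t := by
    intro t
    have := ((hline t).sub ((hasDerivAt_id t).mul_const ⟪gradient f x, v⟫)).sub
      (((hasDerivAt_pow 2 t).const_mul (L / 2)).mul_const (‖v‖ ^ 2))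
    refine this.congr_deriv ?_
    rw [inner_sub_left]
    simp only [one_mul, Nat.cast_ofNat]
    ring
  have hanti : AntitoneOn h (Set.Icc 0 1) := by
    refine antitoneOn_of_deriv_nonpos (convex_Icc 0 1)
      (fun t _ => (hderiv t).continuousAt.continuousWithinAt)
      (fun t _ => (hderiv t).differentiableAt.differentiableWithinAt) fun t ht => ?_
    rw [interior_Icc] at ht
    rw [(hderiv t).deriv, sub_nonpos]
    calc ⟪gradient f (x + t • v) - gradient f x, v⟫
        ≤ ‖gradient f (x + t • v) - gradient f x‖ * ‖v‖ := real_inner_le_norm _ _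
      _ ≤ L * ‖x + t • v - x‖ * ‖v‖ := by gcongr; exact hsmooth _ _
      _ = L * t * ‖v‖ ^ 2 := by
        rw [add_sub_cancel_left, norm_smul, Real.norm_of_nonneg ht.1.le]
        ring
  have := hanti (Set.left_mem_Icc.2 zero_le_one) (Set.right_mem_Icc.2 zero_le_one) zero_le_one
  simp only [h, zero_smul, add_zero, one_smul, zero_mul, one_mul, sub_zero, one_pow, mul_one,
    ne_eq, OfNat.ofNat_ne_zero, not_false_eq_true, zero_pow, mul_zero] at this
  linarith

theorem norm_add_sq_le_one_add_mul {E : Type*} [SeminormedAddCommGroup E] (a b : E) {s : ℝ}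
    (hs : 0 < s) : ‖a + b‖ ^ 2 ≤ (1 + s) * ‖a‖ ^ 2 + (1 + s⁻¹) * ‖b‖ ^ 2 := by
  have young : (‖a‖ + ‖b‖) ^ 2 ≤ (1 + s) * ‖a‖ ^ 2 + (1 + s⁻¹) * ‖b‖ ^ 2 := by
    have hgap : (1 + s) * ‖a‖ ^ 2 + (1 + s⁻¹) * ‖b‖ ^ 2 - (‖a‖ + ‖b‖) ^ 2
        = (s * ‖a‖ - ‖b‖) ^ 2 / s := by
      field_simp
      ring
    have := div_nonneg (sq_nonneg (s * ‖a‖ - ‖b‖)) hs.le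
    linarith
  exact (pow_le_pow_left₀ (norm_nonneg _) (norm_add_le a b) 2).trans young

theorem norm_sub_sq_le_two_mul {E : Type*} [SeminormedAddCommGroup E] (a b c : E) :
    ‖a - c‖ ^ 2 ≤ 2 * ‖a - b‖ ^ 2 + 2 * ‖b - c‖ ^ 2 := by
  have := norm_add_sq_le_one_add_mul (a - b) (b - c) one_pos
  rw [sub_add_sub_cancel] at this
  norm_num at this
  linarith

theorem sum_offDiag_add {ι R : Type*} [DecidableEq ι] [CommRing R] (s : Finset ι) (φ : ι → R) :
    ∑ q ∈ s.offDiag, (φ q.1 + φ q.2) = 2 * ((#s : R) - 1) * ∑ i ∈ s, φ i := by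
  have hsplit := sum_union (disjoint_diag_offDiag s) (f := fun q => φ q.1 + φ q.2)
  rw [diag_union_offDiag, sum_diag, sum_product] at hsplit
  simp only [sum_add_distrib, sum_const, nsmul_eq_mul, ← mul_sum] at hsplit
  rw [sum_add_distrib]
  linear_combination -hsplit

theorem pairwise_norm_sub_sq_le {ι E : Type*} [Fintype ι] [DecidableEq ι] [SeminormedAddCommGroup E]
    (a : ι → E) (m : E) :
    1 / ((Fintype.card ι : ℝ) * ((Fintype.card ι : ℝ) - 1)) *
        ∑ q ∈ univ.offDiag, ‖a q.1 - a q.2‖ ^ 2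
      ≤ 4 * (1 / (Fintype.card ι : ℝ) * ∑ i, ‖a i - m‖ ^ 2) := by
  rcases le_or_gt (Fintype.card ι) 1 with hcard | hcard
  · have : Subsingleton ι := Fintype.card_le_one_iff_subsingleton.1 hcard
    rw [sum_eq_zero fun q hq => absurd (Subsingleton.elim _ _) (mem_offDiag.1 hq).2.2, mul_zero]
    positivity
  have hG : (1 : ℝ) < Fintype.card ι := by exact_mod_cast hcard
  calc 1 / ((Fintype.card ι : ℝ) * ((Fintype.card ι : ℝ) - 1)) *
        ∑ q ∈ univ.offDiag, ‖a q.1 - a q.2‖ ^ 2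
      ≤ 1 / ((Fintype.card ι : ℝ) * ((Fintype.card ι : ℝ) - 1)) *
        ∑ q ∈ univ.offDiag, (2 * ‖a q.1 - m‖ ^ 2 + 2 * ‖a q.2 - m‖ ^ 2) := by
        gcongr with q
        exact (norm_sub_sq_le_two_mul _ m _).trans_eq (by rw [norm_sub_rev m])
    _ = 4 * (1 / (Fintype.card ι : ℝ) * ∑ i, ‖a i - m‖ ^ 2) := by
        rw [sum_offDiag_add univ (fun i => 2 * ‖a i - m‖ ^ 2), ← mul_sum, card_univ]
        field_simp [(sub_pos.2 hG).ne']
        ring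

theorem pairwise_norm_sub_sq_le_add {ι E : Type*} [Fintype ι] [DecidableEq ι]
    [SeminormedAddCommGroup E] (a b : ι → E) (m : E) :
    1 / ((Fintype.card ι : ℝ) * ((Fintype.card ι : ℝ) - 1)) *
        ∑ q ∈ univ.offDiag, ‖a q.1 - a q.2‖ ^ 2
      ≤ 8 * (1 / (Fintype.card ι : ℝ) * ∑ i, ‖a i - b i‖ ^ 2)
        + 8 * (1 / (Fintype.card ι : ℝ) * ∑ i, ‖b i - m‖ ^ 2) := by
  have hsplit : ∑ i, ‖a i - m‖ ^ 2 ≤ 2 * ∑ i, ‖a i - b i‖ ^ 2 + 2 * ∑ i, ‖b i - m‖ ^ 2 := by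
    rw [mul_sum, mul_sum, ← sum_add_distrib]
    exact sum_le_sum fun i _ => norm_sub_sq_le_two_mul _ _ _
  have hG : (0 : ℝ) ≤ 1 / (Fintype.card ι : ℝ) := by positivity
  nlinarith [pairwise_norm_sub_sq_le a m, mul_le_mul_of_nonneg_left hsplit hG]

theorem apply_sub_smul_le_of_gradient_lipschitz {F : Type*} [NormedAddCommGroup F]
    [InnerProductSpace ℝ F] [CompleteSpace F] {f : F → ℝ} (hf : Differentiable ℝ f) {L : ℝ}
    (hsmooth : ∀ x y, ‖gradient f x - gradient f y‖ ≤ L * ‖x - y‖) {γ : ℝ} (hγ : 0 < γ)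
    (x g : F) :
    f (x - γ • g) ≤ f x - γ / 2 * ‖gradient f x‖ ^ 2 - (1 / (2 * γ) - L / 2) * ‖x - γ • g - x‖ ^ 2
      + γ / 2 * ‖g - gradient f x‖ ^ 2 := by
  have hdescent := apply_add_le_of_gradient_lipschitz hf hsmooth x (-(γ • g))
  have hstep : ‖x - γ • g - x‖ = γ * ‖g‖ := by
    rw [sub_sub_cancel_left, norm_neg, norm_smul, Real.norm_of_nonneg hγ.le]
  rw [← sub_eq_add_neg, inner_neg_right, real_inner_smul_right, norm_neg, norm_smul,
    Real.norm_of_nonneg hγ.le] at hdescent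
  have hquad : 1 / (2 * γ) * (γ * ‖g‖) ^ 2 = γ / 2 * ‖g‖ ^ 2 := by
    field_simp
  rw [hstep, norm_sub_sq_real, real_inner_comm]
  linarith

theorem integral_comp_sub_smul_le_of_gradient_lipschitz {F Ω : Type*} [NormedAddCommGroup F]
    [InnerProductSpace ℝ F] [CompleteSpace F] [MeasurableSpace Ω] {μ : Measure Ω} {f : F → ℝ}
    (hf : Differentiable ℝ f) {L : ℝ}
    (hsmooth : ∀ x y, ‖gradient f x - gradient f y‖ ≤ L * ‖x - y‖) {γ s : ℝ} (hγ : 0 < γ)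
    (hs : 0 < s) {x x' v w : Ω → F} (hx' : ∀ ω, x' ω = x ω - γ • v ω)
    (hfx' : Integrable (fun ω => f (x' ω)) μ) (hfx : Integrable (fun ω => f (x ω)) μ)
    (hgrad : Integrable (fun ω => ‖gradient f (x ω)‖ ^ 2) μ)
    (hstep : Integrable (fun ω => ‖x' ω - x ω‖ ^ 2) μ)
    (hvw : Integrable (fun ω => ‖v ω - w ω‖ ^ 2) μ)
    (hw : Integrable (fun ω => ‖w ω - gradient f (x ω)‖ ^ 2) μ) :
    ∫ ω, f (x' ω) ∂μ ≤ ∫ ω, f (x ω) ∂μ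
      + γ / 2 * (1 + s) * ∫ ω, ‖v ω - w ω‖ ^ 2 ∂μ
      + γ / 2 * (1 + s⁻¹) * ∫ ω, ‖w ω - gradient f (x ω)‖ ^ 2 ∂μ
      - γ / 2 * ∫ ω, ‖gradient f (x ω)‖ ^ 2 ∂μ
      - (1 / (2 * γ) - L / 2) * ∫ ω, ‖x' ω - x ω‖ ^ 2 ∂μ := by
  have hpointwise : ∀ ω, f (x' ω) - f (x ω)
      ≤ γ / 2 * (1 + s) * ‖v ω - w ω‖ ^ 2
        + γ / 2 * (1 + s⁻¹) * ‖w ω - gradient f (x ω)‖ ^ 2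
        - γ / 2 * ‖gradient f (x ω)‖ ^ 2 - (1 / (2 * γ) - L / 2) * ‖x' ω - x ω‖ ^ 2 := by
    intro ω
    have hyoung := norm_add_sq_le_one_add_mul (v ω - w ω) (w ω - gradient f (x ω)) hs
    rw [sub_add_sub_cancel] at hyoung
    rw [hx']
    linarith [apply_sub_smul_le_of_gradient_lipschitz hf hsmooth hγ (x ω) (v ω),
      mul_le_mul_of_nonneg_left hyoung (half_pos hγ).le]
  have hvw' := hvw.const_mul (γ / 2 * (1 + s))
  have hw' := hw.const_mul (γ / 2 * (1 + s⁻¹))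
  have hgrad' := hgrad.const_mul (γ / 2)
  have hstep' := hstep.const_mul (1 / (2 * γ) - L / 2)
  have hmono := integral_mono (hfx'.sub' hfx)
    (((hvw'.fun_add hw').sub' hgrad').sub' hstep') hpointwise
  rw [integral_sub hfx' hfx, integral_sub ((hvw'.fun_add hw').sub' hgrad') hstep',
    integral_sub (hvw'.fun_add hw') hgrad', integral_add hvw' hw'] at hmono
  simp only [integral_const_mul] at hmono
  linarith

theorem integral_pairwise_norm_sub_sq_le {ι E Ω : Type*} [Fintype ι] [DecidableEq ι]
    [SeminormedAddCommGroup E] [MeasurableSpace Ω] {μ : Measure Ω} [IsProbabilityMeasure μ]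
    (a b : ι → Ω → E) (m : Ω → E) {B ζ : ℝ}
    (hhet : ∀ ω, 1 / (Fintype.card ι : ℝ) * ∑ i, ‖b i ω - m ω‖ ^ 2 ≤ B * ‖m ω‖ ^ 2 + ζ ^ 2)
    (ha : ∀ i l, Integrable (fun ω => ‖a i ω - a l ω‖ ^ 2) μ)
    (hab : ∀ i, Integrable (fun ω => ‖a i ω - b i ω‖ ^ 2) μ)
    (hm : Integrable (fun ω => ‖m ω‖ ^ 2) μ) :
    1 / ((Fintype.card ι : ℝ) * ((Fintype.card ι : ℝ) - 1)) *
        ∑ q ∈ univ.offDiag, ∫ ω, ‖a q.1 ω - a q.2 ω‖ ^ 2 ∂μ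
      ≤ 8 * ∫ ω, 1 / (Fintype.card ι : ℝ) * ∑ i, ‖a i ω - b i ω‖ ^ 2 ∂μ
        + 8 * B * ∫ ω, ‖m ω‖ ^ 2 ∂μ + 8 * ζ ^ 2 := by
  have hpair : ∀ q : ι × ι, Integrable (fun ω => ‖a q.1 ω - a q.2 ω‖ ^ 2) μ :=
    fun q => ha q.1 q.2
  have hab_avg :=
    (integrable_finsetSum univ fun i _ => hab i).const_mul (1 / (Fintype.card ι : ℝ))
  have hbound := (hab_avg.const_mul 8).fun_add (hm.const_mul (8 * B))
  have hmono := integral_mono ((integrable_finsetSum _ fun q _ => hpair q).const_mul _)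
    (hbound.fun_add (integrable_const (8 * ζ ^ 2))) fun ω =>
      (pairwise_norm_sub_sq_le_add (fun i => a i ω) (fun i => b i ω) (m ω)).trans
        (by linarith [hhet ω])
  rwa [integral_add hbound (integrable_const _), integral_add (hab_avg.const_mul 8)
    (hm.const_mul _), integral_const_mul, integral_finsetSum _ fun q _ => hpair q,
    integral_const_mul 8, integral_const_mul (8 * B), integral_const, probReal_univ,
    one_smul] at hmono

theorem descent_lemma_robust_aggregation_general
    {d : ℕ} {ι : Type*} [Fintype ι] [DecidableEq ι]
    -- local loss functions and their average
    (fS : ι → EuclideanSpace ℝ (Fin d) → ℝ)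
    (f : EuclideanSpace ℝ (Fin d) → ℝ)
    (hf : ∀ x, f x = (1 / (Fintype.card ι : ℝ)) * ∑ i, fS i x)
    (hdiff : ∀ i, Differentiable ℝ (fS i))
    -- L-smoothness of f
    (L : ℝ)
    (hsmooth : ∀ x y, ‖gradient f x - gradient f y‖ ≤ L * ‖x - y‖)
    -- (B, ζ²)-heterogeneity
    (B ζ : ℝ)
    (hhet : ∀ x, (1 / (Fintype.card ι : ℝ)) *
        ∑ i, ‖gradient (fS i) x - gradient f x‖ ^ 2
      ≤ B * ‖gradient f x‖ ^ 2 + ζ ^ 2)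
    -- constants
    (c δ γ s : ℝ) (hc : 0 < c) (hδ0 : 0 ≤ δ) (hγ : 0 < γ) (hs : 0 < s)
    -- underlying probability space and random vectors
    {Ω : Type*} [MeasurableSpace Ω] (μ : Measure Ω) [IsProbabilityMeasure μ]
    (xt : Ω → EuclideanSpace ℝ (Fin d))
    (g : ι → Ω → EuclideanSpace ℝ (Fin d))
    (gt : Ω → EuclideanSpace ℝ (Fin d))
    (xt1 : Ω → EuclideanSpace ℝ (Fin d))
    (hstep : ∀ ω, xt1 ω = xt ω - γ • gt ω)
    -- robust aggregation bound
    (hagg : ∫ ω, ‖gt ω - (Fintype.card ι : ℝ)⁻¹ • ∑ i, g i ω‖ ^ 2 ∂μ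
      ≤ c * δ * ((1 / ((Fintype.card ι : ℝ) * ((Fintype.card ι : ℝ) - 1))) *
          ∑ q ∈ Finset.univ.offDiag, ∫ ω, ‖g q.1 ω - g q.2 ω‖ ^ 2 ∂μ))
    -- integrability of all relevant quantities
    (hint1 : Integrable (fun ω => f (xt1 ω)) μ)
    (hint2 : Integrable (fun ω => f (xt ω)) μ)
    (hint3 : Integrable (fun ω => ‖gradient f (xt ω)‖ ^ 2) μ)
    (hint4 : Integrable (fun ω => ‖xt1 ω - xt ω‖ ^ 2) μ)
    (hint5 : ∀ i, Integrable (fun ω => ‖g i ω - gradient (fS i) (xt ω)‖ ^ 2) μ)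
    (hint6 : Integrable
      (fun ω => ‖(Fintype.card ι : ℝ)⁻¹ • ∑ i, g i ω - gradient f (xt ω)‖ ^ 2) μ)
    (hint7 : ∀ i l : ι, Integrable (fun ω => ‖g i ω - g l ω‖ ^ 2) μ)
    (hint8 : Integrable
      (fun ω => ‖gt ω - (Fintype.card ι : ℝ)⁻¹ • ∑ i, g i ω‖ ^ 2) μ) :
    ∫ ω, f (xt1 ω) ∂μ
      ≤ ∫ ω, f (xt ω) ∂μ
        - (γ * (1 - 8 * B * c * δ * (1 + s)) / 2) *
            ∫ ω, ‖gradient f (xt ω)‖ ^ 2 ∂μ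
        - (1 / (2 * γ) - L / 2) * ∫ ω, ‖xt1 ω - xt ω‖ ^ 2 ∂μ
        + 4 * γ * c * δ * (1 + s) *
            ∫ ω, (1 / (Fintype.card ι : ℝ)) *
              ∑ i, ‖g i ω - gradient (fS i) (xt ω)‖ ^ 2 ∂μ
        + (γ / 2) * (1 + s⁻¹) *
            ∫ ω, ‖(Fintype.card ι : ℝ)⁻¹ • ∑ i, g i ω - gradient f (xt ω)‖ ^ 2 ∂μ
        + 4 * γ * c * δ * (1 + s) * ζ ^ 2 := by
  have hfd : Differentiable ℝ f := by
    rw [funext hf]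
    exact (Differentiable.fun_sum fun i _ => hdiff i).const_mul _
  have hE_descent := integral_comp_sub_smul_le_of_gradient_lipschitz hfd hsmooth hγ hs hstep
    hint1 hint2 hint3 hint4 hint8 hint6
  have hE_pair := integral_pairwise_norm_sub_sq_le g (fun i ω => gradient (fS i) (xt ω))
    (fun ω => gradient f (xt ω)) (fun ω => hhet (xt ω)) hint7 hint5 hint3
  have hE_agg := hagg.trans (mul_le_mul_of_nonneg_left hE_pair (mul_nonneg hc.le hδ0))
  have hweight : 0 ≤ γ / 2 * (1 + s) := by positivity
  linarith [mul_le_mul_of_nonneg_left hE_agg hweight]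

/-- Descent Lemma for Byzantine-robust aggregation. -/
theorem descent_lemma_robust_aggregation
    {d : ℕ} {ι : Type*} [Fintype ι] [DecidableEq ι]
    (hG : 2 ≤ Fintype.card ι)
    -- local loss functions and their average
    (fS : ι → EuclideanSpace ℝ (Fin d) → ℝ)
    (f : EuclideanSpace ℝ (Fin d) → ℝ)
    (hf : ∀ x, f x = (1 / (Fintype.card ι : ℝ)) * ∑ i, fS i x)
    (hdiff : ∀ i, Differentiable ℝ (fS i))
    -- L-smoothness of f
    (L : ℝ) (hL : 0 ≤ L)
    (hsmooth : ∀ x y, ‖gradient f x - gradient f y‖ ≤ L * ‖x - y‖)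
    -- (B, ζ²)-heterogeneity
    (B ζ : ℝ) (hB : 0 ≤ B) (hζ : 0 ≤ ζ)
    (hhet : ∀ x, (1 / (Fintype.card ι : ℝ)) *
        ∑ i, ‖gradient (fS i) x - gradient f x‖ ^ 2
      ≤ B * ‖gradient f x‖ ^ 2 + ζ ^ 2)
    -- constants
    (c δ γ s : ℝ) (hc : 0 < c) (hδ0 : 0 ≤ δ) (hδ : δ < 1 / 2) (hγ : 0 < γ) (hs : 0 < s)
    -- underlying probability space and random vectors
    {Ω : Type*} [MeasurableSpace Ω] (μ : Measure Ω) [IsProbabilityMeasure μ]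
    (xt : Ω → EuclideanSpace ℝ (Fin d))
    (g : ι → Ω → EuclideanSpace ℝ (Fin d))
    (gt : Ω → EuclideanSpace ℝ (Fin d))
    (xt1 : Ω → EuclideanSpace ℝ (Fin d))
    (hstep : ∀ ω, xt1 ω = xt ω - γ • gt ω)
    -- robust aggregation bound
    (hagg : ∫ ω, ‖gt ω - (Fintype.card ι : ℝ)⁻¹ • ∑ i, g i ω‖ ^ 2 ∂μ
      ≤ c * δ * ((1 / ((Fintype.card ι : ℝ) * ((Fintype.card ι : ℝ) - 1))) *
          ∑ q ∈ Finset.univ.offDiag, ∫ ω, ‖g q.1 ω - g q.2 ω‖ ^ 2 ∂μ))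
    -- integrability of all relevant quantities
    (hint1 : Integrable (fun ω => f (xt1 ω)) μ)
    (hint2 : Integrable (fun ω => f (xt ω)) μ)
    (hint3 : Integrable (fun ω => ‖gradient f (xt ω)‖ ^ 2) μ)
    (hint4 : Integrable (fun ω => ‖xt1 ω - xt ω‖ ^ 2) μ)
    (hint5 : ∀ i, Integrable (fun ω => ‖g i ω - gradient (fS i) (xt ω)‖ ^ 2) μ)
    (hint6 : Integrable
      (fun ω => ‖(Fintype.card ι : ℝ)⁻¹ • ∑ i, g i ω - gradient f (xt ω)‖ ^ 2) μ)
    (hint7 : ∀ i l : ι, Integrable (fun ω => ‖g i ω - g l ω‖ ^ 2) μ)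
    (hint8 : Integrable
      (fun ω => ‖gt ω - (Fintype.card ι : ℝ)⁻¹ • ∑ i, g i ω‖ ^ 2) μ) :
    ∫ ω, f (xt1 ω) ∂μ
      ≤ ∫ ω, f (xt ω) ∂μ
        - (γ * (1 - 8 * B * c * δ * (1 + s)) / 2) *
            ∫ ω, ‖gradient f (xt ω)‖ ^ 2 ∂μ
        - (1 / (2 * γ) - L / 2) * ∫ ω, ‖xt1 ω - xt ω‖ ^ 2 ∂μ
        + 4 * γ * c * δ * (1 + s) *
            ∫ ω, (1 / (Fintype.card ι : ℝ)) *
              ∑ i, ‖g i ω - gradient (fS i) (xt ω)‖ ^ 2 ∂μ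
        + (γ / 2) * (1 + s⁻¹) *
            ∫ ω, ‖(Fintype.card ι : ℝ)⁻¹ • ∑ i, g i ω - gradient f (xt ω)‖ ^ 2 ∂μ
        + 4 * γ * c * δ * (1 + s) * ζ ^ 2 :=
  descent_lemma_robust_aggregation_general fS f hf hdiff L hsmooth B ζ hhet c δ γ s hc hδ0 hγ hs μ
    xt g gt xt1 hstep hagg hint1 hint2 hint3 hint4 hint5 hint6 hint7 hint8
end

section
/- (One-step recursion for the average local error in Byz-VR-MARINA 2.0.) In the setting where, with probability p, g_i^{t+1} = ∇f_i(x^{t+1}) for all i ∈ 𝒢 and otherwise g_i^{t+1} = g_i^t + 𝒬_i(Δ̂_i(x^{t+1}, x^t)), with 𝒬_i unbiased compressors with variance parameter ω applied conditionally unbiasedly and Δ̂_i conditionally unbiased mini-batch estimators satisfying the local Hessian variance bound, all mutually independent given (x^t, x^{t+1}, {g_i^t}), one has: (1/G) Σ_{i∈𝒢} E‖g_i^{t+1} − ∇f_i(x^{t+1})‖² ≤ (1−p)·((1/G) Σ_{i∈𝒢} E‖g_i^t − ∇f_i(x^t)‖² + (ω(𝓛±²/b + L±² + L²) + 𝓛±²/b)·E‖x^{t+1}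 − x^t‖²). -/
/-!
Conditionally on the past, worker `i`'s new error `g_i^{t+1} - ∇f_i(x^{t+1})` vanishes with
probability `p`; otherwise it is `a + 𝒬_i(Δ̂_i)` with `a = g_i^t - ∇f_i(x^{t+1})`. Two
bias–variance decompositions, first over the compressor and then over the mini-batch, give
`E‖a + 𝒬_i(Δ̂_i)‖² ≤ ‖a + Δ_i‖² + (1 + ω) E‖Δ̂_i - Δ_i‖² + ω ‖Δ_i‖²`, and `a + Δ_i` is the old
error. Averaging over workers, the local Hessian variance bounds the middle term, while global
Hessian variance and smoothness of `f` give `(1/G) Σ ‖Δ_i‖² ≤ (L±² + L²) ‖x^{t+1} - x^t‖²`.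
-/

open MeasureTheory Finset

section BiasVariance

variable {Ω E : Type*} [MeasurableSpace Ω] [NormedAddCommGroup E] [InnerProductSpace ℝ E]
  {ν : Measure Ω} [IsProbabilityMeasure ν] {h : Ω → E} {m : E}

lemma norm_add_sq_eq_add_inner (a m z : E) :
    ‖a + z‖ ^ 2 = ‖a + m‖ ^ 2 + (2 * inner ℝ (a + m) (z - m) + ‖z - m‖ ^ 2) := by
  rw [show a + z = (a + m) + (z - m) by abel, norm_add_sq_real]
  ring

lemma integrable_norm_add_sq (a : E) (hint : Integrable h ν)
    (hint2 : Integrable (fun w => ‖h w - m‖ ^ 2) ν) :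
    Integrable (fun w => ‖a + h w‖ ^ 2) ν := by
  rw [funext fun w => norm_add_sq_eq_add_inner a m (h w)]
  exact (integrable_const _).add
    (((hint.sub (integrable_const m)).const_inner (a + m)).const_mul 2 |>.add hint2)

variable [CompleteSpace E]

lemma integral_norm_add_sq (a : E) (hint : Integrable h ν)
    (hint2 : Integrable (fun w => ‖h w - m‖ ^ 2) ν) (hm : ∫ w, h w ∂ν = m) :
    ∫ w, ‖a + h w‖ ^ 2 ∂ν = ‖a + m‖ ^ 2 + ∫ w, ‖h w - m‖ ^ 2 ∂ν := by
  have hsub : Integrable (fun w => h w - m) ν := hint.sub (integrable_const m)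
  have hinner : Integrable (fun w => 2 * inner ℝ (a + m) (h w - m)) ν :=
    (hsub.const_inner (a + m)).const_mul 2
  have hmean : ∫ w, 2 * inner ℝ (a + m) (h w - m) ∂ν = 0 := by
    rw [integral_const_mul, integral_inner hsub, integral_sub hint (integrable_const m), hm,
      integral_const, probReal_univ, one_smul, sub_self, inner_zero_right, mul_zero]
  rw [funext fun w => norm_add_sq_eq_add_inner a m (h w),
    integral_add (integrable_const _) (hinner.fun_add hint2), integral_add hinner hint2, hmean,
    integral_const, probReal_univ, one_smul, zero_add]

end BiasVariance

lemma integral_prod_le_of_forall_integral_le {α β : Type*} [MeasurableSpace α]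
    [MeasurableSpace β] {μ : Measure α} {ν : Measure β} [SFinite μ] [SFinite ν]
    {F : α × β → ℝ} {g : α → ℝ} (hF : AEStronglyMeasurable F (μ.prod ν)) (hF0 : 0 ≤ F)
    (hFx : ∀ x, Integrable (fun y => F (x, y)) ν) (hg : Integrable g μ)
    (hle : ∀ x, ∫ y, F (x, y) ∂ν ≤ g x) :
    ∫ z, F z ∂(μ.prod ν) ≤ ∫ x, g x ∂μ := by
  have hFint : Integrable F (μ.prod ν) := by
    refine (integrable_prod_iff hF).2 ⟨.of_forall hFx, hg.mono' hF.norm.integral_prod_right' ?_⟩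
    refine .of_forall fun x => ?_
    simp_rw [Real.norm_eq_abs, abs_of_nonneg (hF0 _)]
    exact (abs_of_nonneg (integral_nonneg fun y => hF0 (x, y))).trans_le (hle x)
  rw [integral_prod F hFint]
  exact integral_mono hFint.integral_prod_left hg hle

lemma integral_bool_of_measure_true {μ : Measure Bool} [IsProbabilityMeasure μ] {p : ℝ}
    (hμ : μ {true} = ENNReal.ofReal p) (hp : 0 ≤ p) (h : Bool → ℝ) :
    ∫ c, h c ∂μ = p * h true + (1 - p) * h false := by
  have htrue : μ.real {true} = p := by rw [measureReal_def, hμ, ENNReal.toReal_ofReal hp]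
  have hfalse : μ.real {false} = 1 - p := by
    rw [← htrue, ← probReal_compl_eq_one_sub (measurableSet_singleton true)]
    congr
    ext c
    simp
  rw [integral_fintype (f := h) .of_finite, Fintype.sum_bool, htrue, hfalse, smul_eq_mul,
    smul_eq_mul]

lemma integrable_of_average_le {ι Ω : Type*} [Fintype ι] [MeasurableSpace Ω] {μ : Measure Ω}
    {V : ι → Ω → ℝ} {g : Ω → ℝ} (hVm : ∀ i, AEStronglyMeasurable (V i) μ)
    (hV0 : ∀ i x, 0 ≤ V i x) (hg : Integrable g μ)
    (hle : ∀ x, (1 / (Fintype.card ι : ℝ)) * ∑ i, V i x ≤ g x) (i : ι) :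
    Integrable (V i) μ := by
  have hG : (0 : ℝ) < Fintype.card ι := Nat.cast_pos.2 (Fintype.card_pos_iff.2 ⟨i⟩)
  refine (hg.const_mul (Fintype.card ι)).mono' (hVm i) (.of_forall fun x => ?_)
  rw [Real.norm_eq_abs, abs_of_nonneg (hV0 i x)]
  calc V i x ≤ ∑ j, V j x := single_le_sum (fun j _ => hV0 j x) (mem_univ i)
    _ = Fintype.card ι * ((1 / (Fintype.card ι : ℝ)) * ∑ j, V j x) := by field_simp
    _ ≤ Fintype.card ι * g x := by gcongr; exact hle x

lemma measurable_gradient {E : Type*} [NormedAddCommGroup E] [InnerProductSpace ℝ E]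
    [CompleteSpace E] [MeasurableSpace E] [BorelSpace E] (f : E → ℝ) :
    Measurable (gradient f) :=
  (InnerProductSpace.toDual ℝ E).symm.continuous.measurable.comp (measurable_fderiv ℝ f)

section Compression

variable {Ω Ωb Ωq Ωr E : Type*} [MeasurableSpace Ω] [MeasurableSpace Ωb] [MeasurableSpace Ωq]
  [MeasurableSpace Ωr] [NormedAddCommGroup E] [InnerProductSpace ℝ E] [MeasurableSpace E]

structure IsUnbiasedCompressor (ν : Measure Ω) (Q : E → Ω → E) (ω : ℝ) : Prop where
  measurable : Measurable fun q : E × Ω => Q q.1 q.2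
  integrable : ∀ z, Integrable (Q z) ν
  integrable_sq : ∀ z, Integrable (fun w => ‖Q z w - z‖ ^ 2) ν
  integral_eq : ∀ z, ∫ w, Q z w ∂ν = z
  variance_le : ∀ z, ∫ w, ‖Q z w - z‖ ^ 2 ∂ν ≤ ω * ‖z‖ ^ 2

structure IsUnbiasedDiffEstimator (ν : Measure Ω) (D : E → E → Ω → E) (grad : E → E) : Prop where
  measurable : Measurable fun q : (E × E) × Ω => D q.1.1 q.1.2 q.2
  integrable : ∀ x y, Integrable (D x y) ν
  integrable_sq : ∀ x y, Integrable (fun v => ‖D x y v - (grad x - grad y)‖ ^ 2) ν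
  integral_eq : ∀ x y, ∫ v, D x y v ∂ν = grad x - grad y

variable {νb : Measure Ωb} {νq : Measure Ωq} {Q : E → Ωq → E} {ω : ℝ}

lemma IsUnbiasedCompressor.measurable_comp (hQ : IsUnbiasedCompressor νq Q ω) {Z : Ωb → E}
    (hZ : Measurable Z) : Measurable fun u : Ωb × Ωq => Q (Z u.1) u.2 :=
  hQ.measurable.comp ((hZ.comp measurable_fst).prodMk measurable_snd)

lemma IsUnbiasedCompressor.integral_norm_add_comp_sq_le [CompleteSpace E] [BorelSpace E]
    [IsProbabilityMeasure νb] [IsProbabilityMeasure νq] (hQ : IsUnbiasedCompressor νq Q ω)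
    {Z : Ωb → E} {m : E} (hZ : Measurable Z) (hZint : Integrable Z νb)
    (hZint2 : Integrable (fun v => ‖Z v - m‖ ^ 2) νb) (hZmean : ∫ v, Z v ∂νb = m) (a : E) :
    ∫ u, ‖a + Q (Z u.1) u.2‖ ^ 2 ∂(νb.prod νq)
      ≤ ‖a + m‖ ^ 2 + (1 + ω) * ∫ v, ‖Z v - m‖ ^ 2 ∂νb + ω * ‖m‖ ^ 2 := by
  have hZsq : Integrable (fun v => ‖Z v‖ ^ 2) νb := by
    simpa only [zero_add] using integrable_norm_add_sq 0 hZint hZint2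
  calc ∫ u, ‖a + Q (Z u.1) u.2‖ ^ 2 ∂(νb.prod νq)
      ≤ ∫ v, (‖a + Z v‖ ^ 2 + ω * ‖Z v‖ ^ 2) ∂νb := by
        refine integral_prod_le_of_forall_integral_le (g := fun v => ‖a + Z v‖ ^ 2 + ω * ‖Z v‖ ^ 2)
          (((hQ.measurable_comp hZ).const_add a).norm.pow_const 2).aestronglyMeasurable
          (fun u => sq_nonneg _)
          (fun v => integrable_norm_add_sq a (hQ.integrable (Z v)) (hQ.integrable_sq (Z v)))
          ((integrable_norm_add_sq a hZint hZint2).fun_add (hZsq.const_mul ω)) fun v => ?_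
        rw [integral_norm_add_sq a (hQ.integrable (Z v)) (hQ.integrable_sq (Z v))
          (hQ.integral_eq (Z v))]
        exact add_le_add_right (hQ.variance_le (Z v)) _
    _ = ‖a + m‖ ^ 2 + (1 + ω) * ∫ v, ‖Z v - m‖ ^ 2 ∂νb + ω * ‖m‖ ^ 2 := by
        have hZsq_eq := integral_norm_add_sq 0 hZint hZint2 hZmean
        simp only [zero_add] at hZsq_eq
        rw [integral_add (integrable_norm_add_sq a hZint hZint2) (hZsq.const_mul ω),
          integral_const_mul, integral_norm_add_sq a hZint hZint2 hZmean, hZsq_eq]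
        ring

lemma IsUnbiasedDiffEstimator.measurable_integral_norm_sub_sq [BorelSpace E]
    [SecondCountableTopology E] [SFinite νb] {D : E → E → Ωb → E} {grad : E → E}
    (hD : IsUnbiasedDiffEstimator νb D grad) (hgrad : Measurable grad) :
    Measurable fun z : E × E => ∫ v, ‖D z.1 z.2 v - (grad z.1 - grad z.2)‖ ^ 2 ∂νb :=
  ((hD.measurable.sub ((hgrad.comp (measurable_fst.comp measurable_fst)).sub
    (hgrad.comp (measurable_snd.comp measurable_fst)))).norm.pow_const 2).stronglyMeasurable
    |>.integral_prod_right'.measurable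

variable [CompleteSpace E] [BorelSpace E] [IsProbabilityMeasure νb] [IsProbabilityMeasure νq]
  {μc : Measure Bool} [IsProbabilityMeasure μc] {p : ℝ} {ρ : Measure Ωr} [SFinite ρ]
  {π : Ωr → Ωb × Ωq} {D : E → E → Ωb → E} {grad : E → E}

lemma integral_norm_update_sub_sq_le (hcoin : μc {true} = ENNReal.ofReal p) (hp0 : 0 ≤ p)
    (hp1 : p ≤ 1) (hπ : MeasurePreserving π ρ (νb.prod νq))
    (hD : IsUnbiasedDiffEstimator νb D grad) (hQ : IsUnbiasedCompressor νq Q ω) (g x' x : E)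
    (hint : Integrable (fun r : Bool × Ωr =>
      ‖(if r.1 then grad x' else g + Q (D x' x (π r.2).1) (π r.2).2) - grad x'‖ ^ 2)
      (μc.prod ρ)) :
    ∫ r, ‖(if r.1 then grad x' else g + Q (D x' x (π r.2).1) (π r.2).2) - grad x'‖ ^ 2
        ∂(μc.prod ρ)
      ≤ (1 - p) * (‖g - grad x‖ ^ 2
        + (1 + ω) * ∫ v, ‖D x' x v - (grad x' - grad x)‖ ^ 2 ∂νb
        + ω * ‖grad x' - grad x‖ ^ 2) := by
  have hDxy : Measurable (D x' x) :=
    hD.measurable.comp (measurable_const (a := (x', x)) |>.prodMk measurable_id)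
  set K : Ωb × Ωq → ℝ := fun u => ‖(g - grad x') + Q (D x' x u.1) u.2‖ ^ 2
  have hK : Measurable K := ((hQ.measurable_comp hDxy).const_add _).norm.pow_const 2
  rw [integral_prod _ hint, integral_bool_of_measure_true hcoin hp0]
  simp only [if_true, sub_self, norm_zero, Bool.false_eq_true, if_false]
  calc p * ∫ _, (0 : ℝ) ^ 2 ∂ρ + (1 - p) * ∫ r, ‖g + Q (D x' x (π r).1) (π r).2 - grad x'‖ ^ 2 ∂ρ
      = (1 - p) * ∫ r, K (π r) ∂ρ := by
        simp only [K, sub_add_eq_add_sub, zero_pow two_ne_zero, integral_zero, mul_zero, zero_add]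
    _ = (1 - p) * ∫ u, K u ∂(νb.prod νq) := by
        rw [← hπ.map_eq, integral_map hπ.aemeasurable hK.aestronglyMeasurable]
    _ ≤ _ := by
        refine mul_le_mul_of_nonneg_left ?_ (sub_nonneg.2 hp1)
        refine (hQ.integral_norm_add_comp_sq_le hDxy (hD.integrable x' x) (hD.integrable_sq x' x)
          (hD.integral_eq x' x) _).trans_eq ?_
        rw [sub_add_sub_cancel]

lemma integral_norm_update_sub_sq_le_integral {Ω₀ : Type*} [MeasurableSpace Ω₀]
    {μ₀ : Measure Ω₀} [SFinite μ₀] (hcoin : μc {true} = ENNReal.ofReal p) (hp0 : 0 ≤ p)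
    (hp1 : p ≤ 1) (hπ : MeasurePreserving π ρ (νb.prod νq))
    (hD : IsUnbiasedDiffEstimator νb D grad) (hQ : IsUnbiasedCompressor νq Q ω)
    {x x' g : Ω₀ → E} {g' : Ω₀ × Bool × Ωr → E}
    (hg' : ∀ w, g' w = if w.2.1 then grad (x' w.1)
      else g w.1 + Q (D (x' w.1) (x w.1) (π w.2.2).1) (π w.2.2).2)
    (hint : Integrable (fun w => ‖g' w - grad (x' w.1)‖ ^ 2) (μ₀.prod (μc.prod ρ)))
    (hB : Integrable (fun s => ‖g s - grad (x s)‖ ^ 2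
      + (1 + ω) * ∫ v, ‖D (x' s) (x s) v - (grad (x' s) - grad (x s))‖ ^ 2 ∂νb
      + ω * ‖grad (x' s) - grad (x s)‖ ^ 2) μ₀) :
    ∫ w, ‖g' w - grad (x' w.1)‖ ^ 2 ∂(μ₀.prod (μc.prod ρ))
      ≤ (1 - p) * ∫ s, (‖g s - grad (x s)‖ ^ 2
        + (1 + ω) * ∫ v, ‖D (x' s) (x s) v - (grad (x' s) - grad (x s))‖ ^ 2 ∂νb
        + ω * ‖grad (x' s) - grad (x s)‖ ^ 2) ∂μ₀ := by
  rw [integral_prod _ hint, ← integral_const_mul]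
  refine integral_mono_ae hint.integral_prod_left (hB.const_mul _) ?_
  filter_upwards [hint.prod_right_ae] with s hs
  simp only [hg'] at hs ⊢
  exact integral_norm_update_sub_sq_le hcoin hp0 hp1 hπ hD hQ (g s) (x' s) (x s) hs

end Compression

lemma average_le_of_forall_le_integral {ι Ω : Type*} [Fintype ι] [MeasurableSpace Ω]
    {μ : Measure Ω} {X : ι → ℝ} {e V W : ι → Ω → ℝ} {δ : Ω → ℝ} {p ω cV cW : ℝ} (hp1 : p ≤ 1)
    (hω : 0 ≤ ω) (he : ∀ i, Integrable (e i) μ) (hV : ∀ i, Integrable (V i) μ)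
    (hW : ∀ i, Integrable (W i) μ) (hδ : Integrable δ μ)
    (hX : ∀ i, X i ≤ (1 - p) * ∫ s, (e i s + (1 + ω) * V i s + ω * W i s) ∂μ)
    (hVavg : ∀ s, (1 / (Fintype.card ι : ℝ)) * ∑ i, V i s ≤ cV * δ s)
    (hWavg : ∀ s, (1 / (Fintype.card ι : ℝ)) * ∑ i, W i s ≤ cW * δ s) :
    (1 / (Fintype.card ι : ℝ)) * ∑ i, X i
      ≤ (1 - p) * ((1 / (Fintype.card ι : ℝ)) * ∑ i, ∫ s, e i s ∂μ
        + (ω * (cV + cW) + cV) * ∫ s, δ s ∂μ) := by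
  set c : ℝ := 1 / (Fintype.card ι : ℝ)
  have hB : ∀ i, Integrable (fun s => e i s + (1 + ω) * V i s + ω * W i s) μ := fun i =>
    ((he i).add ((hV i).const_mul _)).add ((hW i).const_mul _)
  have he_sum : Integrable (fun s => c * ∑ i, e i s) μ :=
    (integrable_finsetSum _ fun i _ => he i).const_mul c
  have hpoint : ∀ s, c * ∑ i, (e i s + (1 + ω) * V i s + ω * W i s)
      ≤ c * ∑ i, e i s + (ω * (cV + cW) + cV) * δ s := fun s => by
    have hV' := mul_le_mul_of_nonneg_left (hVavg s) (by linarith : 0 ≤ 1 + ω)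
    have hW' := mul_le_mul_of_nonneg_left (hWavg s) hω
    rw [sum_add_distrib, sum_add_distrib, ← mul_sum, ← mul_sum]
    linear_combination hV' + hW'
  calc c * ∑ i, X i
      ≤ c * ∑ i, (1 - p) * ∫ s, (e i s + (1 + ω) * V i s + ω * W i s) ∂μ := by
        gcongr with i; exact hX i
    _ = (1 - p) * ∫ s, c * ∑ i, (e i s + (1 + ω) * V i s + ω * W i s) ∂μ := by
        rw [integral_const_mul, integral_finsetSum _ fun i _ => hB i, ← mul_sum]
        ring
    _ ≤ (1 - p) * ∫ s, (c * ∑ i, e i s + (ω * (cV + cW) + cV) * δ s) ∂μ := by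
        refine mul_le_mul_of_nonneg_left (integral_mono ?_ (he_sum.add (hδ.const_mul _)) hpoint)
          (sub_nonneg.2 hp1)
        exact (integrable_finsetSum _ fun i _ => hB i).const_mul c
    _ = _ := by
        rw [integral_add he_sum (hδ.const_mul _), integral_const_mul, integral_const_mul,
          integral_finsetSum _ fun i _ => he i]

theorem local_error_recursion_byz_vr_marina2_general
    {d : ℕ} {ι : Type*} [Fintype ι]
    -- local loss functions and their average
    (fS : ι → EuclideanSpace ℝ (Fin d) → ℝ)
    (f : EuclideanSpace ℝ (Fin d) → ℝ)
    -- L-smoothness of f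
    (L : ℝ)
    (hsmooth : ∀ x y, ‖gradient f x - gradient f y‖ ≤ L * ‖x - y‖)
    -- global Hessian variance
    (Lpm : ℝ)
    (hGH : ∀ x y, (1 / (Fintype.card ι : ℝ)) *
          ∑ i, ‖gradient (fS i) x - gradient (fS i) y‖ ^ 2
        - ‖gradient f x - gradient f y‖ ^ 2
      ≤ Lpm ^ 2 * ‖x - y‖ ^ 2)
    -- probability of full-gradient synchronization
    (p : ℝ) (hp0 : 0 < p) (hp1 : p ≤ 1)
    -- past randomness
    {Ω₀ : Type*} [MeasurableSpace Ω₀] (μ₀ : Measure Ω₀) [IsProbabilityMeasure μ₀]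
    -- coin randomness
    (μc : Measure Bool) [IsProbabilityMeasure μc]
    (hcoin : μc {true} = ENNReal.ofReal p)
    -- mini-batch estimator randomness (independent across workers)
    {Ωb : ι → Type*} [∀ i, MeasurableSpace (Ωb i)]
    (νb : ∀ i, Measure (Ωb i)) [∀ i, IsProbabilityMeasure (νb i)]
    -- compressor randomness (independent across workers)
    {Ωq : ι → Type*} [∀ i, MeasurableSpace (Ωq i)]
    (νq : ∀ i, Measure (Ωq i)) [∀ i, IsProbabilityMeasure (νq i)]
    -- mini-batch estimators: conditionally unbiased, local Hessian variance with batch size b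
    (Dhat : (i : ι) → EuclideanSpace ℝ (Fin d) → EuclideanSpace ℝ (Fin d) →
      Ωb i → EuclideanSpace ℝ (Fin d))
    (hDmeas : ∀ i, Measurable fun q :
        (EuclideanSpace ℝ (Fin d) × EuclideanSpace ℝ (Fin d)) × Ωb i =>
        Dhat i q.1.1 q.1.2 q.2)
    (hDint : ∀ i x y, Integrable (fun wb => Dhat i x y wb) (νb i))
    (hDint2 : ∀ i x y, Integrable
      (fun wb => ‖Dhat i x y wb - (gradient (fS i) x - gradient (fS i) y)‖ ^ 2) (νb i))
    (hDunbiased : ∀ i x y,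
      ∫ wb, Dhat i x y wb ∂(νb i) = gradient (fS i) x - gradient (fS i) y)
    (b Lloc : ℝ)
    (hlocal : ∀ x y, (1 / (Fintype.card ι : ℝ)) *
        ∑ i, ∫ wb, ‖Dhat i x y wb - (gradient (fS i) x - gradient (fS i) y)‖ ^ 2 ∂(νb i)
      ≤ (Lloc ^ 2 / b) * ‖x - y‖ ^ 2)
    -- unbiased compressors with variance parameter ω
    (omg : ℝ) (homg : 0 ≤ omg)
    (Q : (i : ι) → EuclideanSpace ℝ (Fin d) → Ωq i → EuclideanSpace ℝ (Fin d))
    (hQmeas : ∀ i, Measurable fun q : EuclideanSpace ℝ (Fin d) × Ωq i => Q i q.1 q.2)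
    (hQint : ∀ i z, Integrable (fun wq => Q i z wq) (νq i))
    (hQint2 : ∀ i z, Integrable (fun wq => ‖Q i z wq - z‖ ^ 2) (νq i))
    (hQunbiased : ∀ i z, ∫ wq, Q i z wq ∂(νq i) = z)
    (hQvar : ∀ i z, ∫ wq, ‖Q i z wq - z‖ ^ 2 ∂(νq i) ≤ omg * ‖z‖ ^ 2)
    -- current iterates (measurable with respect to the past)
    (xt xt1 : Ω₀ → EuclideanSpace ℝ (Fin d))
    (gt : ι → Ω₀ → EuclideanSpace ℝ (Fin d))
    (hxtm : Measurable xt) (hxt1m : Measurable xt1)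
    -- the new local estimators: with probability p send full gradients,
    -- otherwise add a compressed stochastic gradient difference
    (gt1 : ι → Ω₀ × Bool × (∀ i, Ωb i) × (∀ i, Ωq i) → EuclideanSpace ℝ (Fin d))
    (hgt1 : ∀ i w, gt1 i w =
      if w.2.1 then gradient (fS i) (xt1 w.1)
      else gt i w.1 + Q i (Dhat i (xt1 w.1) (xt w.1) (w.2.2.1 i)) (w.2.2.2 i))
    -- integrability of the relevant squared norms
    (hint1 : ∀ i, Integrable
      (fun w : Ω₀ × Bool × (∀ i, Ωb i) × (∀ i, Ωq i) =>
        ‖gt1 i w - gradient (fS i) (xt1 w.1)‖ ^ 2)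
      (μ₀.prod (μc.prod ((Measure.pi νb).prod (Measure.pi νq)))))
    (hint2 : ∀ i, Integrable
      (fun ω₀ => ‖gt i ω₀ - gradient (fS i) (xt ω₀)‖ ^ 2) μ₀)
    (hint3 : Integrable (fun ω₀ => ‖xt1 ω₀ - xt ω₀‖ ^ 2) μ₀) :
    (1 / (Fintype.card ι : ℝ)) *
        ∑ i, ∫ w, ‖gt1 i w - gradient (fS i) (xt1 w.1)‖ ^ 2
          ∂(μ₀.prod (μc.prod ((Measure.pi νb).prod (Measure.pi νq))))
      ≤ (1 - p) *
        ((1 / (Fintype.card ι : ℝ)) *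
            ∑ i, ∫ ω₀, ‖gt i ω₀ - gradient (fS i) (xt ω₀)‖ ^ 2 ∂μ₀
          + (omg * (Lloc ^ 2 / b + Lpm ^ 2 + L ^ 2) + Lloc ^ 2 / b) *
            ∫ ω₀, ‖xt1 ω₀ - xt ω₀‖ ^ 2 ∂μ₀) := by
  have hgrad : ∀ i, Measurable (gradient (fS i)) := fun i => measurable_gradient (fS i)
  have hD : ∀ i, IsUnbiasedDiffEstimator (νb i) (Dhat i) (gradient (fS i)) := fun i =>
    ⟨hDmeas i, hDint i, hDint2 i, hDunbiased i⟩
  have hQ : ∀ i, IsUnbiasedCompressor (νq i) (Q i) omg := fun i =>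
    ⟨hQmeas i, hQint i, hQint2 i, hQunbiased i, hQvar i⟩
  have hgrad_diff_avg : ∀ s, (1 / (Fintype.card ι : ℝ)) *
      ∑ i, ‖gradient (fS i) (xt1 s) - gradient (fS i) (xt s)‖ ^ 2
        ≤ (Lpm ^ 2 + L ^ 2) * ‖xt1 s - xt s‖ ^ 2 := fun s => by
    nlinarith [hGH (xt1 s) (xt s), pow_le_pow_left₀ (norm_nonneg _) (hsmooth (xt1 s) (xt s)) 2]
  have hvar_int := integrable_of_average_le (μ := μ₀)
    (V := fun i s => ∫ v, ‖Dhat i (xt1 s) (xt s) v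
      - (gradient (fS i) (xt1 s) - gradient (fS i) (xt s))‖ ^ 2 ∂(νb i))
    (fun i => ((hD i).measurable_integral_norm_sub_sq (hgrad i)).comp
      (hxt1m.prodMk hxtm) |>.aestronglyMeasurable)
    (fun i s => integral_nonneg fun _ => sq_nonneg _) (hint3.const_mul _) (fun s => hlocal _ _)
  have hgrad_diff_int := integrable_of_average_le (μ := μ₀)
    (fun i => (((hgrad i).comp hxt1m).sub ((hgrad i).comp hxtm)).norm.pow_const 2
      |>.aestronglyMeasurable) (fun i s => sq_nonneg _) (hint3.const_mul _) hgrad_diff_avg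
  refine (average_le_of_forall_le_integral hp1 homg hint2 hvar_int hgrad_diff_int hint3
    (fun i => ?_) (fun s => hlocal _ _) hgrad_diff_avg).trans_eq (by ring)
  exact integral_norm_update_sub_sq_le_integral hcoin hp0.le hp1
    ((measurePreserving_eval νb i).prod (measurePreserving_eval νq i)) (hD i) (hQ i) (hgt1 i)
    (hint1 i)
    (((hint2 i).fun_add ((hvar_int i).const_mul _)).fun_add ((hgrad_diff_int i).const_mul _))

/-- One-step recursion for the mean gradient estimator in Byz-VR-MARINA 2.0. -/
theorem local_error_recursion_byz_vr_marina2
    {d : ℕ} {ι : Type*} [Fintype ι]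
    -- local loss functions and their average
    (fS : ι → EuclideanSpace ℝ (Fin d) → ℝ)
    (f : EuclideanSpace ℝ (Fin d) → ℝ)
    (hf : ∀ x, f x = (1 / (Fintype.card ι : ℝ)) * ∑ i, fS i x)
    (hdiff : ∀ i, Differentiable ℝ (fS i))
    -- L-smoothness of f
    (L : ℝ) (hL : 0 ≤ L)
    (hsmooth : ∀ x y, ‖gradient f x - gradient f y‖ ≤ L * ‖x - y‖)
    -- global Hessian variance
    (Lpm : ℝ) (hLpm : 0 ≤ Lpm)
    (hGH : ∀ x y, (1 / (Fintype.card ι : ℝ)) *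
          ∑ i, ‖gradient (fS i) x - gradient (fS i) y‖ ^ 2
        - ‖gradient f x - gradient f y‖ ^ 2
      ≤ Lpm ^ 2 * ‖x - y‖ ^ 2)
    -- probability of full-gradient synchronization
    (p : ℝ) (hp0 : 0 < p) (hp1 : p ≤ 1)
    -- past randomness
    {Ω₀ : Type*} [MeasurableSpace Ω₀] (μ₀ : Measure Ω₀) [IsProbabilityMeasure μ₀]
    -- coin randomness
    (μc : Measure Bool) [IsProbabilityMeasure μc]
    (hcoin : μc {true} = ENNReal.ofReal p)
    -- mini-batch estimator randomness (independent across workers)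
    {Ωb : ι → Type*} [∀ i, MeasurableSpace (Ωb i)]
    (νb : ∀ i, Measure (Ωb i)) [∀ i, IsProbabilityMeasure (νb i)]
    -- compressor randomness (independent across workers)
    {Ωq : ι → Type*} [∀ i, MeasurableSpace (Ωq i)]
    (νq : ∀ i, Measure (Ωq i)) [∀ i, IsProbabilityMeasure (νq i)]
    -- mini-batch estimators: conditionally unbiased, local Hessian variance with batch size b
    (Dhat : (i : ι) → EuclideanSpace ℝ (Fin d) → EuclideanSpace ℝ (Fin d) →
      Ωb i → EuclideanSpace ℝ (Fin d))
    (hDmeas : ∀ i, Measurable fun q :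
        (EuclideanSpace ℝ (Fin d) × EuclideanSpace ℝ (Fin d)) × Ωb i =>
        Dhat i q.1.1 q.1.2 q.2)
    (hDint : ∀ i x y, Integrable (fun wb => Dhat i x y wb) (νb i))
    (hDint2 : ∀ i x y, Integrable
      (fun wb => ‖Dhat i x y wb - (gradient (fS i) x - gradient (fS i) y)‖ ^ 2) (νb i))
    (hDunbiased : ∀ i x y,
      ∫ wb, Dhat i x y wb ∂(νb i) = gradient (fS i) x - gradient (fS i) y)
    (b Lloc : ℝ) (hb : 0 < b) (hLloc : 0 ≤ Lloc)
    (hlocal : ∀ x y, (1 / (Fintype.card ι : ℝ)) *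
        ∑ i, ∫ wb, ‖Dhat i x y wb - (gradient (fS i) x - gradient (fS i) y)‖ ^ 2 ∂(νb i)
      ≤ (Lloc ^ 2 / b) * ‖x - y‖ ^ 2)
    -- unbiased compressors with variance parameter ω
    (omg : ℝ) (homg : 0 ≤ omg)
    (Q : (i : ι) → EuclideanSpace ℝ (Fin d) → Ωq i → EuclideanSpace ℝ (Fin d))
    (hQmeas : ∀ i, Measurable fun q : EuclideanSpace ℝ (Fin d) × Ωq i => Q i q.1 q.2)
    (hQint : ∀ i z, Integrable (fun wq => Q i z wq) (νq i))
    (hQint2 : ∀ i z, Integrable (fun wq => ‖Q i z wq - z‖ ^ 2) (νq i))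
    (hQunbiased : ∀ i z, ∫ wq, Q i z wq ∂(νq i) = z)
    (hQvar : ∀ i z, ∫ wq, ‖Q i z wq - z‖ ^ 2 ∂(νq i) ≤ omg * ‖z‖ ^ 2)
    -- current iterates (measurable with respect to the past)
    (xt xt1 : Ω₀ → EuclideanSpace ℝ (Fin d))
    (gt : ι → Ω₀ → EuclideanSpace ℝ (Fin d))
    (hxtm : Measurable xt) (hxt1m : Measurable xt1) (hgtm : ∀ i, Measurable (gt i))
    -- the new local estimators: with probability p send full gradients,
    -- otherwise add a compressed stochastic gradient difference
    (gt1 : ι → Ω₀ × Bool × (∀ i, Ωb i) × (∀ i, Ωq i) → EuclideanSpace ℝ (Fin d))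
    (hgt1 : ∀ i w, gt1 i w =
      if w.2.1 then gradient (fS i) (xt1 w.1)
      else gt i w.1 + Q i (Dhat i (xt1 w.1) (xt w.1) (w.2.2.1 i)) (w.2.2.2 i))
    -- integrability of the relevant squared norms
    (hint1 : ∀ i, Integrable
      (fun w : Ω₀ × Bool × (∀ i, Ωb i) × (∀ i, Ωq i) =>
        ‖gt1 i w - gradient (fS i) (xt1 w.1)‖ ^ 2)
      (μ₀.prod (μc.prod ((Measure.pi νb).prod (Measure.pi νq)))))
    (hint2 : ∀ i, Integrable
      (fun ω₀ => ‖gt i ω₀ - gradient (fS i) (xt ω₀)‖ ^ 2) μ₀)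
    (hint3 : Integrable (fun ω₀ => ‖xt1 ω₀ - xt ω₀‖ ^ 2) μ₀) :
    (1 / (Fintype.card ι : ℝ)) *
        ∑ i, ∫ w, ‖gt1 i w - gradient (fS i) (xt1 w.1)‖ ^ 2
          ∂(μ₀.prod (μc.prod ((Measure.pi νb).prod (Measure.pi νq))))
      ≤ (1 - p) *
        ((1 / (Fintype.card ι : ℝ)) *
            ∑ i, ∫ ω₀, ‖gt i ω₀ - gradient (fS i) (xt ω₀)‖ ^ 2 ∂μ₀
          + (omg * (Lloc ^ 2 / b + Lpm ^ 2 + L ^ 2) + Lloc ^ 2 / b) *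
            ∫ ω₀, ‖xt1 ω₀ - xt ω₀‖ ^ 2 ∂μ₀) :=
  local_error_recursion_byz_vr_marina2_general fS f L hsmooth Lpm hGH p hp0 hp1 μ₀ μc hcoin νb νq
    Dhat hDmeas hDint hDint2 hDunbiased b Lloc hlocal omg homg Q hQmeas hQint hQint2 hQunbiased
    hQvar xt xt1 gt hxtm hxt1m gt1 hgt1 hint1 hint2 hint3
end

section
/- (Bound on the shift increments in Byz-DASHA-PAGE.) Suppose h_i^{t+1} = ∇f_i(x^{t+1}) with probability p (the same coin for all i, independent of the rest) and h_i^{t+1} = h_i^t + Δ̂_i(x^{t+1}, x^t) otherwise, where the Δ̂_i are conditionally unbiased mini-batch estimators with batch size b satisfying the local Hessian variance bound. Then: (1/G) Σ_{i∈𝒢} E‖h_i^{t+1} − h_i^t‖² ≤ ((1−p)𝓛±²/b + 2(L±² + L²))·E‖x^{t+1} − x^t‖² + 2p·(1/G) Σ_{i∈𝒢} E‖h_i^t − ∇f_i(x^t)‖². -/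
/-!
Condition on the past. With probability `p` the increment is `∇fᵢ(x⁺) - hᵢ`, whose square is at
most `2‖∇fᵢ(x⁺) - ∇fᵢ(x)‖² + 2‖hᵢ - ∇fᵢ(x)‖²`; with probability `1 - p` it is the estimator
`Δ̂ᵢ(x⁺, x)`, whose second moment is `‖Δᵢ‖²` plus its variance. After averaging over the workers,
the variances are controlled by the local Hessian variance, and the mean of `‖Δᵢ‖²`, which
appears with weight `1 + p ≤ 2`, by the global Hessian variance plus the `L`-smoothness of `f`.
-/

open MeasureTheory Finset RealInnerProductSpace

section

variable {E : Type*} [NormedAddCommGroup E]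

theorem avg_coin_update_moment_le {ι : Type*} (s : Finset ι) (g g' h : ι → E) (V : ι → ℝ)
    {w p K M r : ℝ} (hw : 0 ≤ w) (hp0 : 0 ≤ p) (hp1 : p ≤ 1)
    (hdiff : w * ∑ i ∈ s, ‖g i - g' i‖ ^ 2 ≤ K * r) (hV : w * ∑ i ∈ s, V i ≤ M * r) :
    w * ∑ i ∈ s, (p * ‖g i - h i‖ ^ 2 + (1 - p) * (‖g i - g' i‖ ^ 2 + V i))
      ≤ ((1 - p) * M + 2 * K) * r + 2 * p * (w * ∑ i ∈ s, ‖h i - g' i‖ ^ 2) := by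
  have htriangle : ∀ i, ‖g i - h i‖ ^ 2 ≤ 2 * ‖g i - g' i‖ ^ 2 + 2 * ‖h i - g' i‖ ^ 2 :=
    fun i => by
      have := norm_sub_le_norm_sub_add_norm_sub (g i) (g' i) (h i)
      rw [norm_sub_rev (g' i)] at this
      linarith [pow_le_pow_left₀ (norm_nonneg _) this 2, add_sq_le (R := ℝ) (a := ‖g i - g' i‖)
        (b := ‖h i - g' i‖)]
  have hsplit : w * ∑ i ∈ s, (p * ‖g i - h i‖ ^ 2 + (1 - p) * (‖g i - g' i‖ ^ 2 + V i))
      ≤ (1 + p) * (w * ∑ i ∈ s, ‖g i - g' i‖ ^ 2) + (1 - p) * (w * ∑ i ∈ s, V i)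
        + 2 * p * (w * ∑ i ∈ s, ‖h i - g' i‖ ^ 2) := by
    simp only [mul_sum, ← sum_add_distrib]
    refine sum_le_sum fun i _ => ?_
    nlinarith [mul_le_mul_of_nonneg_left (mul_le_mul_of_nonneg_left (htriangle i) hp0) hw]
  have hdiff0 : 0 ≤ w * ∑ i ∈ s, ‖g i - g' i‖ ^ 2 := by positivity
  nlinarith [mul_le_mul_of_nonneg_left hV (sub_nonneg.2 hp1)]

variable [InnerProductSpace ℝ E]

theorem integral_norm_sq_eq_norm_sq_add_integral_norm_sub_sq [CompleteSpace E]
    {Ω : Type*} [MeasurableSpace Ω] {μ : Measure Ω} [IsProbabilityMeasure μ]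
    {X : Ω → E} {m : E} (hX : Integrable X μ) (hX2 : Integrable (fun ω => ‖X ω - m‖ ^ 2) μ)
    (hm : ∫ ω, X ω ∂μ = m) :
    ∫ ω, ‖X ω‖ ^ 2 ∂μ = ‖m‖ ^ 2 + ∫ ω, ‖X ω - m‖ ^ 2 ∂μ := by
  have hcentered : Integrable (fun ω => X ω - m) μ := hX.sub (integrable_const m)
  have hcross : Integrable (fun ω => 2 * ⟪m, X ω - m⟫) μ := (hcentered.const_inner m).const_mul 2
  have hmean_zero : ∫ ω, ⟪m, X ω - m⟫ ∂μ = 0 := by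
    rw [integral_inner hcentered, integral_sub hX (integrable_const m), hm, integral_const,
      probReal_univ, one_smul, sub_self, inner_zero_right]
  have hexpand : ∀ ω, ‖X ω‖ ^ 2 = ‖X ω - m‖ ^ 2 + 2 * ⟪m, X ω - m⟫ + ‖m‖ ^ 2 := fun ω => by
    have := norm_add_sq_real (X ω - m) m
    rwa [sub_add_cancel, real_inner_comm] at this
  simp_rw [hexpand]
  rw [integral_add (f := fun ω => ‖X ω - m‖ ^ 2 + 2 * ⟪m, X ω - m⟫) (hX2.add hcross)
      (integrable_const _), integral_add hX2 hcross, integral_const_mul, hmean_zero]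
  simp only [integral_const, probReal_univ, one_smul]
  ring

theorem measureReal_bool_of_measure_true_eq {μc : Measure Bool} [IsProbabilityMeasure μc]
    {p : ℝ} (hp : 0 ≤ p) (hcoin : μc {true} = ENNReal.ofReal p) :
    μc.real {true} = p ∧ μc.real {false} = 1 - p := by
  have htrue : μc.real {true} = p := by
    rw [measureReal_def, hcoin, ENNReal.toReal_ofReal hp]
  have hsum := measureReal_add_measureReal_compl (μ := μc) (measurableSet_singleton true)
  rw [Bool.compl_singleton, Bool.not_true, probReal_univ, htrue] at hsum
  exact ⟨htrue, by linarith⟩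

theorem integral_bool_prod_eq {Ω : Type*} [MeasurableSpace Ω] [CompleteSpace E]
    {μc : Measure Bool} [IsProbabilityMeasure μc] {p : ℝ} (hp : 0 ≤ p)
    (hcoin : μc {true} = ENNReal.ofReal p) {ν : Measure Ω} [SFinite ν]
    {g : Bool × Ω → E} (hg : Integrable g (μc.prod ν)) :
    ∫ z, g z ∂(μc.prod ν) = p • ∫ ω, g (true, ω) ∂ν + (1 - p) • ∫ ω, g (false, ω) ∂ν := by
  obtain ⟨htrue, hfalse⟩ := measureReal_bool_of_measure_true_eq hp hcoin
  rw [integral_prod g hg, integral_fintype .of_finite, Fintype.sum_bool, htrue, hfalse]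

theorem integral_norm_sq_coin_update_sub [CompleteSpace E] {ι : Type*} [Fintype ι]
    {Ωb : ι → Type*} [∀ i, MeasurableSpace (Ωb i)]
    {νb : ∀ i, Measure (Ωb i)} [∀ i, IsProbabilityMeasure (νb i)]
    {μc : Measure Bool} [IsProbabilityMeasure μc] {p : ℝ} (hp : 0 ≤ p)
    (hcoin : μc {true} = ENNReal.ofReal p) {i : ι} (u h m : E) {D : Ωb i → E}
    (hD : Integrable D (νb i)) (hD2 : Integrable (fun ω => ‖D ω - m‖ ^ 2) (νb i))
    (hmean : ∫ ω, D ω ∂(νb i) = m)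
    (hint : Integrable (fun z : Bool × (∀ j, Ωb j) =>
      ‖(if z.1 then u else h + D (z.2 i)) - h‖ ^ 2) (μc.prod (Measure.pi νb))) :
    ∫ z, ‖(if z.1 then u else h + D (z.2 i)) - h‖ ^ 2 ∂(μc.prod (Measure.pi νb))
      = p * ‖u - h‖ ^ 2 + (1 - p) * (‖m‖ ^ 2 + ∫ ω, ‖D ω - m‖ ^ 2 ∂(νb i)) := by
  rw [integral_bool_prod_eq hp hcoin hint]
  simp only [if_true, Bool.false_eq_true, if_false, add_sub_cancel_left, integral_const,
    probReal_univ, smul_eq_mul, one_mul]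
  rw [integral_comp_eval (f := fun ω => ‖D ω‖ ^ 2) (hD.aestronglyMeasurable.norm.pow 2),
    integral_norm_sq_eq_norm_sq_add_integral_norm_sub_sq hD hD2 hmean]

end

theorem shift_increment_bound_byz_dasha_page_general
    {d : ℕ} {ι : Type*} [Fintype ι]
    -- local loss functions and their average
    (fS : ι → EuclideanSpace ℝ (Fin d) → ℝ)
    (f : EuclideanSpace ℝ (Fin d) → ℝ)
    -- L-smoothness of f
    (L : ℝ)
    (hsmooth : ∀ x y, ‖gradient f x - gradient f y‖ ≤ L * ‖x - y‖)
    -- global Hessian variance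
    (Lpm : ℝ)
    (hGH : ∀ x y, (1 / (Fintype.card ι : ℝ)) *
          ∑ i, ‖gradient (fS i) x - gradient (fS i) y‖ ^ 2
        - ‖gradient f x - gradient f y‖ ^ 2
      ≤ Lpm ^ 2 * ‖x - y‖ ^ 2)
    -- probability of full-gradient synchronization
    (p : ℝ) (hp0 : 0 < p)
    -- past randomness
    {Ω₀ : Type*} [MeasurableSpace Ω₀] (μ₀ : Measure Ω₀) [IsProbabilityMeasure μ₀]
    -- coin randomness (the same coin for all workers)
    (μc : Measure Bool) [IsProbabilityMeasure μc]
    (hcoin : μc {true} = ENNReal.ofReal p)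
    -- mini-batch estimator randomness (independent across workers)
    {Ωb : ι → Type*} [∀ i, MeasurableSpace (Ωb i)]
    (νb : ∀ i, Measure (Ωb i)) [∀ i, IsProbabilityMeasure (νb i)]
    -- mini-batch estimators: conditionally unbiased, local Hessian variance with batch size b
    (Dhat : (i : ι) → EuclideanSpace ℝ (Fin d) → EuclideanSpace ℝ (Fin d) →
      Ωb i → EuclideanSpace ℝ (Fin d))
    (hDint : ∀ i x y, Integrable (fun wb => Dhat i x y wb) (νb i))
    (hDint2 : ∀ i x y, Integrable
      (fun wb => ‖Dhat i x y wb - (gradient (fS i) x - gradient (fS i) y)‖ ^ 2) (νb i))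
    (hDunbiased : ∀ i x y,
      ∫ wb, Dhat i x y wb ∂(νb i) = gradient (fS i) x - gradient (fS i) y)
    (b Lloc : ℝ)
    (hlocal : ∀ x y, (1 / (Fintype.card ι : ℝ)) *
        ∑ i, ∫ wb, ‖Dhat i x y wb - (gradient (fS i) x - gradient (fS i) y)‖ ^ 2 ∂(νb i)
      ≤ (Lloc ^ 2 / b) * ‖x - y‖ ^ 2)
    -- current iterates and shifts (measurable with respect to the past)
    (xt xt1 : Ω₀ → EuclideanSpace ℝ (Fin d))
    (ht : ι → Ω₀ → EuclideanSpace ℝ (Fin d))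
    -- the new shifts: with probability p set to the full gradient,
    -- otherwise add a stochastic gradient difference
    (ht1 : ι → Ω₀ × Bool × (∀ i, Ωb i) → EuclideanSpace ℝ (Fin d))
    (hht1 : ∀ i w, ht1 i w =
      if w.2.1 then gradient (fS i) (xt1 w.1)
      else ht i w.1 + Dhat i (xt1 w.1) (xt w.1) (w.2.2 i))
    -- integrability of the relevant squared norms
    (hint1 : ∀ i, Integrable
      (fun w : Ω₀ × Bool × (∀ i, Ωb i) => ‖ht1 i w - ht i w.1‖ ^ 2)
      (μ₀.prod (μc.prod (Measure.pi νb))))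
    (hint2 : ∀ i, Integrable
      (fun ω₀ => ‖ht i ω₀ - gradient (fS i) (xt ω₀)‖ ^ 2) μ₀)
    (hint3 : Integrable (fun ω₀ => ‖xt1 ω₀ - xt ω₀‖ ^ 2) μ₀) :
    (1 / (Fintype.card ι : ℝ)) *
        ∑ i, ∫ w, ‖ht1 i w - ht i w.1‖ ^ 2 ∂(μ₀.prod (μc.prod (Measure.pi νb)))
      ≤ ((1 - p) * Lloc ^ 2 / b + 2 * (Lpm ^ 2 + L ^ 2)) *
          ∫ ω₀, ‖xt1 ω₀ - xt ω₀‖ ^ 2 ∂μ₀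
        + 2 * p * ((1 / (Fintype.card ι : ℝ)) *
            ∑ i, ∫ ω₀, ‖ht i ω₀ - gradient (fS i) (xt ω₀)‖ ^ 2 ∂μ₀) := by
  set κ := 1 / (Fintype.card ι : ℝ)
  set c := (1 - p) * Lloc ^ 2 / b + 2 * (Lpm ^ 2 + L ^ 2)
  let F : ι → Ω₀ → ℝ := fun i ω₀ => p * ‖gradient (fS i) (xt1 ω₀) - ht i ω₀‖ ^ 2
    + (1 - p) * (‖gradient (fS i) (xt1 ω₀) - gradient (fS i) (xt ω₀)‖ ^ 2
      + ∫ wb, ‖Dhat i (xt1 ω₀) (xt ω₀) wb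
          - (gradient (fS i) (xt1 ω₀) - gradient (fS i) (xt ω₀))‖ ^ 2 ∂(νb i))
  have hp1 : p ≤ 1 := by
    have := (measureReal_bool_of_measure_true_eq hp0.le hcoin).2
    linarith [measureReal_nonneg (μ := μc) (s := {false})]
  have hcond : ∀ i, ∀ᵐ ω₀ ∂μ₀,
      ∫ z, ‖ht1 i (ω₀, z) - ht i ω₀‖ ^ 2 ∂(μc.prod (Measure.pi νb)) = F i ω₀ := fun i => by
    filter_upwards [(hint1 i).prod_right_ae] with ω₀ hω₀
    simp only [hht1] at hω₀ ⊢
    exact integral_norm_sq_coin_update_sub hp0.le hcoin _ _ _ (hDint i _ _) (hDint2 i _ _)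
      (hDunbiased i _ _) hω₀
  have hF_int : ∀ i, Integrable (F i) μ₀ := fun i =>
    (hint1 i).integral_prod_left.congr (hcond i)
  have hH_int : Integrable (fun ω₀ =>
      2 * p * (κ * ∑ i, ‖ht i ω₀ - gradient (fS i) (xt ω₀)‖ ^ 2)) μ₀ :=
    ((integrable_finsetSum _ fun i _ => hint2 i).const_mul _).const_mul _
  have hgrad : ∀ x y,
      κ * ∑ i, ‖gradient (fS i) x - gradient (fS i) y‖ ^ 2 ≤ (Lpm ^ 2 + L ^ 2) * ‖x - y‖ ^ 2 :=
    fun x y => by nlinarith [hGH x y, pow_le_pow_left₀ (norm_nonneg _) (hsmooth x y) 2]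
  have hbound : ∀ ω₀, κ * ∑ i, F i ω₀ ≤ c * ‖xt1 ω₀ - xt ω₀‖ ^ 2
      + 2 * p * (κ * ∑ i, ‖ht i ω₀ - gradient (fS i) (xt ω₀)‖ ^ 2) := fun ω₀ => by
    have := avg_coin_update_moment_le univ (fun i => gradient (fS i) (xt1 ω₀))
      (fun i => gradient (fS i) (xt ω₀)) (ht · ω₀) _ (by positivity) hp0.le hp1
      (hgrad _ _) (hlocal _ _)
    rwa [← mul_div_assoc] at this
  calc κ * ∑ i, ∫ w, ‖ht1 i w - ht i w.1‖ ^ 2 ∂(μ₀.prod (μc.prod (Measure.pi νb)))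
      = ∫ ω₀, κ * ∑ i, F i ω₀ ∂μ₀ := by
        rw [integral_const_mul, integral_finsetSum _ fun i _ => hF_int i]
        refine congrArg _ (sum_congr rfl fun i _ => ?_)
        rw [integral_prod _ (hint1 i)]
        exact integral_congr_ae (hcond i)
    _ ≤ ∫ ω₀, (c * ‖xt1 ω₀ - xt ω₀‖ ^ 2
          + 2 * p * (κ * ∑ i, ‖ht i ω₀ - gradient (fS i) (xt ω₀)‖ ^ 2)) ∂μ₀ :=
        integral_mono ((integrable_finsetSum _ fun i _ => hF_int i).const_mul _)
          ((hint3.const_mul _).add hH_int) hbound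
    _ = _ := by
        rw [integral_add (hint3.const_mul _) hH_int, integral_const_mul, integral_const_mul,
          integral_const_mul, integral_finsetSum _ fun i _ => hint2 i]

/-- Bound on the shift increments in Byz-DASHA-PAGE. -/
theorem shift_increment_bound_byz_dasha_page
    {d : ℕ} {ι : Type*} [Fintype ι]
    -- local loss functions and their average
    (fS : ι → EuclideanSpace ℝ (Fin d) → ℝ)
    (f : EuclideanSpace ℝ (Fin d) → ℝ)
    (hf : ∀ x, f x = (1 / (Fintype.card ι : ℝ)) * ∑ i, fS i x)
    (hdiff : ∀ i, Differentiable ℝ (fS i))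
    -- L-smoothness of f
    (L : ℝ) (hL : 0 ≤ L)
    (hsmooth : ∀ x y, ‖gradient f x - gradient f y‖ ≤ L * ‖x - y‖)
    -- global Hessian variance
    (Lpm : ℝ) (hLpm : 0 ≤ Lpm)
    (hGH : ∀ x y, (1 / (Fintype.card ι : ℝ)) *
          ∑ i, ‖gradient (fS i) x - gradient (fS i) y‖ ^ 2
        - ‖gradient f x - gradient f y‖ ^ 2
      ≤ Lpm ^ 2 * ‖x - y‖ ^ 2)
    -- probability of full-gradient synchronization
    (p : ℝ) (hp0 : 0 < p) (hp1 : p ≤ 1)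
    -- past randomness
    {Ω₀ : Type*} [MeasurableSpace Ω₀] (μ₀ : Measure Ω₀) [IsProbabilityMeasure μ₀]
    -- coin randomness (the same coin for all workers)
    (μc : Measure Bool) [IsProbabilityMeasure μc]
    (hcoin : μc {true} = ENNReal.ofReal p)
    -- mini-batch estimator randomness (independent across workers)
    {Ωb : ι → Type*} [∀ i, MeasurableSpace (Ωb i)]
    (νb : ∀ i, Measure (Ωb i)) [∀ i, IsProbabilityMeasure (νb i)]
    -- mini-batch estimators: conditionally unbiased, local Hessian variance with batch size b
    (Dhat : (i : ι) → EuclideanSpace ℝ (Fin d) → EuclideanSpace ℝ (Fin d) →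
      Ωb i → EuclideanSpace ℝ (Fin d))
    (hDmeas : ∀ i, Measurable fun q :
        (EuclideanSpace ℝ (Fin d) × EuclideanSpace ℝ (Fin d)) × Ωb i =>
        Dhat i q.1.1 q.1.2 q.2)
    (hDint : ∀ i x y, Integrable (fun wb => Dhat i x y wb) (νb i))
    (hDint2 : ∀ i x y, Integrable
      (fun wb => ‖Dhat i x y wb - (gradient (fS i) x - gradient (fS i) y)‖ ^ 2) (νb i))
    (hDunbiased : ∀ i x y,
      ∫ wb, Dhat i x y wb ∂(νb i) = gradient (fS i) x - gradient (fS i) y)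
    (b Lloc : ℝ) (hb : 0 < b) (hLloc : 0 ≤ Lloc)
    (hlocal : ∀ x y, (1 / (Fintype.card ι : ℝ)) *
        ∑ i, ∫ wb, ‖Dhat i x y wb - (gradient (fS i) x - gradient (fS i) y)‖ ^ 2 ∂(νb i)
      ≤ (Lloc ^ 2 / b) * ‖x - y‖ ^ 2)
    -- current iterates and shifts (measurable with respect to the past)
    (xt xt1 : Ω₀ → EuclideanSpace ℝ (Fin d))
    (ht : ι → Ω₀ → EuclideanSpace ℝ (Fin d))
    (hxtm : Measurable xt) (hxt1m : Measurable xt1) (hhtm : ∀ i, Measurable (ht i))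
    -- the new shifts: with probability p set to the full gradient,
    -- otherwise add a stochastic gradient difference
    (ht1 : ι → Ω₀ × Bool × (∀ i, Ωb i) → EuclideanSpace ℝ (Fin d))
    (hht1 : ∀ i w, ht1 i w =
      if w.2.1 then gradient (fS i) (xt1 w.1)
      else ht i w.1 + Dhat i (xt1 w.1) (xt w.1) (w.2.2 i))
    -- integrability of the relevant squared norms
    (hint1 : ∀ i, Integrable
      (fun w : Ω₀ × Bool × (∀ i, Ωb i) => ‖ht1 i w - ht i w.1‖ ^ 2)
      (μ₀.prod (μc.prod (Measure.pi νb))))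
    (hint2 : ∀ i, Integrable
      (fun ω₀ => ‖ht i ω₀ - gradient (fS i) (xt ω₀)‖ ^ 2) μ₀)
    (hint3 : Integrable (fun ω₀ => ‖xt1 ω₀ - xt ω₀‖ ^ 2) μ₀) :
    (1 / (Fintype.card ι : ℝ)) *
        ∑ i, ∫ w, ‖ht1 i w - ht i w.1‖ ^ 2 ∂(μ₀.prod (μc.prod (Measure.pi νb)))
      ≤ ((1 - p) * Lloc ^ 2 / b + 2 * (Lpm ^ 2 + L ^ 2)) *
          ∫ ω₀, ‖xt1 ω₀ - xt ω₀‖ ^ 2 ∂μ₀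
        + 2 * p * ((1 / (Fintype.card ι : ℝ)) *
            ∑ i, ∫ ω₀, ‖ht i ω₀ - gradient (fS i) (xt ω₀)‖ ^ 2 ∂μ₀) :=
  shift_increment_bound_byz_dasha_page_general fS f L hsmooth Lpm hGH p hp0 μ₀ μc hcoin νb Dhat
    hDint hDint2 hDunbiased b Lloc hlocal xt xt1 ht ht1 hht1 hint1 hint2 hint3
end

section
/- (Recursion for the mean shift error in Byz-DASHA-PAGE.) Suppose h_i^{t+1} = ∇f_i(x^{t+1}) with probability p (same coin for all i) and h_i^{t+1} = h_i^t + Δ̂_i(x^{t+1}, x^t) otherwise, where the Δ̂_i are conditionally unbiased mini-batch estimators with batch size b satisfying the local Hessian variance bound and are mutually independent given (x^t, x^{t+1}, {h_i^t}). Then with h^s = (1/G) Σ_{i∈𝒢} h_i^s: E‖h^{t+1} − ∇f(x^{t+1})‖² ≤ (1−p)·E‖h^t − ∇f(x^t)‖² + ((1−p)𝓛±²/(Gb))·E‖x^{t+1} − x^t‖². -/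
/-!
Condition on the past and integrate out the coin and the mini-batches. On the synchronisation
event the averaged shift is exactly `∇f(x^{t+1})`, so the error vanishes. Otherwise the error is
`m + G⁻¹ ∑ᵢ (Δ̂ᵢ - (∇fᵢ(x^{t+1}) - ∇fᵢ(x^t)))`, where `m = h^t - ∇f(x^t)` is fixed by the past
and the summands are independent and centred. The cross terms then vanish in expectation, the
second moment is `‖m‖² + G⁻² ∑ᵢ E‖Δ̂ᵢ - …‖²`, and the local Hessian variance bounds the last sum
by `G 𝓛±² / b ‖x^{t+1} - x^t‖²`.
-/

open MeasureTheory ProbabilityTheory Finset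

section Gradient

variable {F : Type*} [NormedAddCommGroup F] [InnerProductSpace ℝ F] [CompleteSpace F]
  {ι : Type*} [Fintype ι]

theorem gradient_const_mul_sum (c : ℝ) {g : ι → F → ℝ} {x : F}
    (hg : ∀ i, DifferentiableAt ℝ (g i) x) :
    gradient (fun y => c * ∑ i, g i y) x = c • ∑ i, gradient (g i) x := by
  simp only [gradient, fderiv_const_mul (DifferentiableAt.fun_sum fun i _ => hg i),
    fderiv_fun_sum fun i _ => hg i, map_smul, map_sum]

end Gradient

section SecondMoment

variable {E : Type*} [NormedAddCommGroup E] [InnerProductSpace ℝ E] [CompleteSpace E]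
  {Ω : Type*} [MeasurableSpace Ω] {μ : Measure Ω}

theorem integral_norm_add_sq_of_integral_eq_zero [IsProbabilityMeasure μ] (m : E) {Y : Ω → E}
    (hY : MemLp Y 2 μ) (hY0 : μ[Y] = 0) :
    ∫ ω, ‖m + Y ω‖ ^ 2 ∂μ = ‖m‖ ^ 2 + ∫ ω, ‖Y ω‖ ^ 2 ∂μ := by
  have h1 := hY.integrable one_le_two
  have h2 : Integrable (fun ω => ‖Y ω‖ ^ 2) μ := hY.integrable_norm_pow'
  have hlin : Integrable (fun ω => 2 * inner ℝ m (Y ω)) μ := (h1.const_inner m).const_mul 2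
  simp_rw [norm_add_sq_real]
  rw [integral_add ((integrable_const _).fun_add hlin) h2, integral_add (integrable_const _) hlin,
    integral_const_mul, integral_inner h1, hY0]
  simp

variable [MeasurableSpace E] [BorelSpace E]

theorem ProbabilityTheory.iIndepFun.integral_norm_sum_sq [IsFiniteMeasure μ] {ι : Type*}
    [Fintype ι] {Y : ι → Ω → E} (hY : iIndepFun Y μ) (hL2 : ∀ i, MemLp (Y i) 2 μ) (hY0 : ∀ i, μ[Y i] = 0) :
    ∫ ω, ‖∑ i, Y i ω‖ ^ 2 ∂μ = ∑ i, ∫ ω, ‖Y i ω‖ ^ 2 ∂μ := by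
  have h1 i : Integrable (Y i) μ := (hL2 i).integrable one_le_two
  have hcross i j : Integrable (fun ω => inner ℝ (Y i ω) (Y j ω)) μ := by
    rcases eq_or_ne i j with rfl | hij
    · simpa only [real_inner_self_eq_norm_sq] using (hL2 i).integrable_norm_pow'
    · exact (hY.indepFun hij).integrable_bilin (h1 i) (h1 j) (innerSL ℝ)
  have horth i j (hij : i ≠ j) : ∫ ω, inner ℝ (Y i ω) (Y j ω) ∂μ = 0 := by
    have h := (hY.indepFun hij).integral_bilin (h1 i) (h1 j) (innerSL ℝ)
    rwa [hY0, map_zero, zero_apply] at h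
  simp_rw [← real_inner_self_eq_norm_sq, sum_inner, inner_sum]
  rw [integral_finsetSum _ fun i _ => integrable_finsetSum _ fun j _ => hcross i j]
  refine sum_congr rfl fun i _ => ?_
  rw [integral_finsetSum _ fun j _ => hcross i j,
    sum_eq_single i (fun j _ hji => horth i j hji.symm) (by simp)]

theorem integral_pi_norm_add_sum_sq {ι : Type*} [Fintype ι] {X : ι → Type*}
    [∀ i, MeasurableSpace (X i)] {ν : ∀ i, Measure (X i)} [∀ i, IsProbabilityMeasure (ν i)]
    (m : E) {Z : ∀ i, X i → E} (hZ : ∀ i, MemLp (Z i) 2 (ν i))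
    (hZ0 : ∀ i, ∫ x, Z i x ∂ν i = 0) :
    ∫ w, ‖m + ∑ i, Z i (w i)‖ ^ 2 ∂Measure.pi ν = ‖m‖ ^ 2 + ∑ i, ∫ x, ‖Z i x‖ ^ 2 ∂ν i := by
  have hY i : MemLp (fun w : ∀ j, X j => Z i (w i)) 2 (Measure.pi ν) :=
    (hZ i).comp_measurePreserving (measurePreserving_eval ν i)
  have hY0 i : ∫ w, Z i (w i) ∂Measure.pi ν = 0 := by
    rw [integral_comp_eval (hZ i).aestronglyMeasurable, hZ0]
  have hsum0 : ∫ w, ∑ i, Z i (w i) ∂Measure.pi ν = 0 := by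
    rw [integral_finsetSum _ fun i _ => (hY i).integrable one_le_two]
    exact sum_eq_zero fun i _ => hY0 i
  rw [integral_norm_add_sq_of_integral_eq_zero m (memLp_finsetSum _ fun i _ => hY i) hsum0,
    (iIndepFun_pi fun i => (hZ i).aestronglyMeasurable.aemeasurable).integral_norm_sum_sq hY hY0]
  congr 1
  exact sum_congr rfl fun i _ =>
    integral_comp_eval (hZ i).integrable_norm_pow'.aestronglyMeasurable

end SecondMoment

theorem integral_prod_bool_ite_zero {β : Type*} [MeasurableSpace β] (μc : Measure Bool)
    [IsFiniteMeasure μc] (ν : Measure β) [SFinite ν] (φ : β → ℝ) :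
    ∫ z, (if z.1 then 0 else φ z.2) ∂μc.prod ν = μc.real {false} * ∫ y, φ y ∂ν := by
  have hfactor : (fun z : Bool × β => if z.1 then 0 else φ z.2)
      = fun z => (if z.1 then 0 else 1) * φ z.2 := by
    funext z; split_ifs <;> simp
  rw [hfactor, integral_prod_mul (fun b : Bool => if b then (0 : ℝ) else 1) φ,
    integral_fintype .of_finite]
  simp

section PageUpdate

variable {ι : Type*} [Fintype ι] {E : Type*} [NormedAddCommGroup E] [InnerProductSpace ℝ E]
  [CompleteSpace E] [MeasurableSpace E] [BorelSpace E]
  {Ωb : ι → Type*} [∀ i, MeasurableSpace (Ωb i)] {νb : ∀ i, Measure (Ωb i)}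
  [∀ i, IsProbabilityMeasure (νb i)]

theorem integral_norm_sq_avg_page_update (μc : Measure Bool) [IsFiniteMeasure μc]
    (g : ι → E → E) (h : ι → E) (x y : E) (D : ∀ i, Ωb i → E)
    (hD : ∀ i, Integrable (D i) (νb i))
    (hD2 : ∀ i, Integrable (fun u => ‖D i u - (g i y - g i x)‖ ^ 2) (νb i))
    (hmean : ∀ i, ∫ u, D i u ∂νb i = g i y - g i x) :
    ∫ z, ‖(Fintype.card ι : ℝ)⁻¹ • ∑ i, (if z.1 then g i y else h i + D i (z.2 i))
        - (Fintype.card ι : ℝ)⁻¹ • ∑ i, g i y‖ ^ 2 ∂μc.prod (Measure.pi νb)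
      = μc.real {false} * (‖(Fintype.card ι : ℝ)⁻¹ • ∑ i, h i
          - (Fintype.card ι : ℝ)⁻¹ • ∑ i, g i x‖ ^ 2
        + (Fintype.card ι : ℝ)⁻¹ ^ 2 * ∑ i, ∫ u, ‖D i u - (g i y - g i x)‖ ^ 2 ∂νb i) := by
  set c := (Fintype.card ι : ℝ)⁻¹
  set Z : ∀ i, Ωb i → E := fun i u => c • (D i u - (g i y - g i x))
  have hZ i : MemLp (Z i) 2 (νb i) :=
    ((memLp_two_iff_integrable_sq_norm
      ((hD i).sub (integrable_const _)).aestronglyMeasurable).2 (hD2 i)).const_smul c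
  have hZ0 i : ∫ u, Z i u ∂νb i = 0 := by
    simp [Z, integral_smul, integral_sub (hD i) (integrable_const _), hmean]
  have hsplit (z : Bool × ∀ i, Ωb i) :
      ‖c • ∑ i, (if z.1 then g i y else h i + D i (z.2 i)) - c • ∑ i, g i y‖ ^ 2
        = if z.1 then 0
          else ‖(c • ∑ i, h i - c • ∑ i, g i x) + ∑ i, Z i (z.2 i)‖ ^ 2 := by
    rcases z with ⟨_ | _, w⟩
    · simp only [Bool.false_eq_true, if_false, Z, ← smul_sum, ← smul_sub, ← smul_add,
        sum_add_distrib, sum_sub_distrib]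
      congr 3
      abel
    · simp
  simp_rw [hsplit]
  rw [integral_prod_bool_ite_zero μc _
      (fun w : ∀ i, Ωb i => ‖(c • ∑ i, h i - c • ∑ i, g i x) + ∑ i, Z i (w i)‖ ^ 2),
    integral_pi_norm_add_sum_sq _ hZ hZ0]
  simp only [Z, norm_smul, mul_pow, Real.norm_eq_abs, sq_abs, integral_const_mul, ← mul_sum]

theorem integral_norm_sq_avg_page_update_le (μc : Measure Bool) [IsFiniteMeasure μc]
    (g : ι → E → E) (h : ι → E) (x y : E) (D : ∀ i, Ωb i → E)
    (hD : ∀ i, Integrable (D i) (νb i))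
    (hD2 : ∀ i, Integrable (fun u => ‖D i u - (g i y - g i x)‖ ^ 2) (νb i))
    (hmean : ∀ i, ∫ u, D i u ∂νb i = g i y - g i x) {C : ℝ}
    (hvar : 1 / (Fintype.card ι : ℝ) *
      ∑ i, ∫ u, ‖D i u - (g i y - g i x)‖ ^ 2 ∂νb i ≤ C) :
    ∫ z, ‖(Fintype.card ι : ℝ)⁻¹ • ∑ i, (if z.1 then g i y else h i + D i (z.2 i))
        - (Fintype.card ι : ℝ)⁻¹ • ∑ i, g i y‖ ^ 2 ∂μc.prod (Measure.pi νb)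
      ≤ μc.real {false} * (‖(Fintype.card ι : ℝ)⁻¹ • ∑ i, h i
          - (Fintype.card ι : ℝ)⁻¹ • ∑ i, g i x‖ ^ 2 + (Fintype.card ι : ℝ)⁻¹ * C) := by
  rw [integral_norm_sq_avg_page_update μc g h x y D hD hD2 hmean]
  rw [one_div] at hvar
  refine mul_le_mul_of_nonneg_left (add_le_add_right ?_ _) measureReal_nonneg
  calc _ = (Fintype.card ι : ℝ)⁻¹ * ((Fintype.card ι : ℝ)⁻¹ *
        ∑ i, ∫ u, ‖D i u - (g i y - g i x)‖ ^ 2 ∂νb i) := by ring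
    _ ≤ _ := by gcongr

end PageUpdate

theorem mean_shift_error_recursion_byz_dasha_page_general
    {d : ℕ} {ι : Type*} [Fintype ι]
    -- local loss functions and their average
    (fS : ι → EuclideanSpace ℝ (Fin d) → ℝ)
    (f : EuclideanSpace ℝ (Fin d) → ℝ)
    (hf : ∀ x, f x = (1 / (Fintype.card ι : ℝ)) * ∑ i, fS i x)
    (hdiff : ∀ i, Differentiable ℝ (fS i))
    -- probability of full-gradient synchronization
    (p : ℝ) (hp0 : 0 < p)
    -- past randomness
    {Ω₀ : Type*} [MeasurableSpace Ω₀] (μ₀ : Measure Ω₀) [IsProbabilityMeasure μ₀]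
    -- coin randomness (the same coin for all workers)
    (μc : Measure Bool) [IsProbabilityMeasure μc]
    (hcoin : μc {true} = ENNReal.ofReal p)
    -- mini-batch estimator randomness (independent across workers)
    {Ωb : ι → Type*} [∀ i, MeasurableSpace (Ωb i)]
    (νb : ∀ i, Measure (Ωb i)) [∀ i, IsProbabilityMeasure (νb i)]
    -- mini-batch estimators: conditionally unbiased, local Hessian variance with batch size b
    (Dhat : (i : ι) → EuclideanSpace ℝ (Fin d) → EuclideanSpace ℝ (Fin d) →
      Ωb i → EuclideanSpace ℝ (Fin d))
    (hDint : ∀ i x y, Integrable (fun wb => Dhat i x y wb) (νb i))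
    (hDint2 : ∀ i x y, Integrable
      (fun wb => ‖Dhat i x y wb - (gradient (fS i) x - gradient (fS i) y)‖ ^ 2) (νb i))
    (hDunbiased : ∀ i x y,
      ∫ wb, Dhat i x y wb ∂(νb i) = gradient (fS i) x - gradient (fS i) y)
    (b Lloc : ℝ)
    (hlocal : ∀ x y, (1 / (Fintype.card ι : ℝ)) *
        ∑ i, ∫ wb, ‖Dhat i x y wb - (gradient (fS i) x - gradient (fS i) y)‖ ^ 2 ∂(νb i)
      ≤ (Lloc ^ 2 / b) * ‖x - y‖ ^ 2)
    -- current iterates and shifts (measurable with respect to the past)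
    (xt xt1 : Ω₀ → EuclideanSpace ℝ (Fin d))
    (ht : ι → Ω₀ → EuclideanSpace ℝ (Fin d))
    -- the new shifts: with probability p set to the full gradient,
    -- otherwise add a stochastic gradient difference
    (ht1 : ι → Ω₀ × Bool × (∀ i, Ωb i) → EuclideanSpace ℝ (Fin d))
    (hht1 : ∀ i w, ht1 i w =
      if w.2.1 then gradient (fS i) (xt1 w.1)
      else ht i w.1 + Dhat i (xt1 w.1) (xt w.1) (w.2.2 i))
    -- integrability of the relevant squared norms
    (hint1 : Integrable
      (fun w : Ω₀ × Bool × (∀ i, Ωb i) =>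
        ‖(Fintype.card ι : ℝ)⁻¹ • ∑ i, ht1 i w - gradient f (xt1 w.1)‖ ^ 2)
      (μ₀.prod (μc.prod (Measure.pi νb))))
    (hint2 : Integrable
      (fun ω₀ => ‖(Fintype.card ι : ℝ)⁻¹ • ∑ i, ht i ω₀ - gradient f (xt ω₀)‖ ^ 2) μ₀)
    (hint3 : Integrable (fun ω₀ => ‖xt1 ω₀ - xt ω₀‖ ^ 2) μ₀) :
    ∫ w, ‖(Fintype.card ι : ℝ)⁻¹ • ∑ i, ht1 i w - gradient f (xt1 w.1)‖ ^ 2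
        ∂(μ₀.prod (μc.prod (Measure.pi νb)))
      ≤ (1 - p) *
          ∫ ω₀, ‖(Fintype.card ι : ℝ)⁻¹ • ∑ i, ht i ω₀ - gradient f (xt ω₀)‖ ^ 2 ∂μ₀
        + ((1 - p) * Lloc ^ 2 / ((Fintype.card ι : ℝ) * b)) *
          ∫ ω₀, ‖xt1 ω₀ - xt ω₀‖ ^ 2 ∂μ₀ := by
  set G := (Fintype.card ι : ℝ)
  have hgrad x : gradient f x = G⁻¹ • ∑ i, gradient (fS i) x := by
    rw [funext hf, gradient_const_mul_sum _ fun i => (hdiff i) x, one_div]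
  have hfalse : μc.real {false} = 1 - p := by
    rw [show ({false} : Set Bool) = {true}ᶜ from (Bool.compl_singleton true).symm,
      probReal_compl_eq_one_sub (measurableSet_singleton _), measureReal_def, hcoin,
      ENNReal.toReal_ofReal hp0.le]
  have hstep ω : ∫ z, ‖G⁻¹ • ∑ i, ht1 i (ω, z) - gradient f (xt1 ω)‖ ^ 2
        ∂μc.prod (Measure.pi νb)
      ≤ μc.real {false} * (‖G⁻¹ • ∑ i, ht i ω - gradient f (xt ω)‖ ^ 2
        + G⁻¹ * (Lloc ^ 2 / b * ‖xt1 ω - xt ω‖ ^ 2)) := by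
    simp only [hht1, hgrad]
    exact integral_norm_sq_avg_page_update_le μc (fun i => gradient (fS i)) (ht · ω) (xt ω)
      (xt1 ω) (fun i => Dhat i (xt1 ω) (xt ω)) (fun i => hDint i _ _) (fun i => hDint2 i _ _)
      (fun i => hDunbiased i _ _) (hlocal _ _)
  have hbound := (hint2.fun_add ((hint3.const_mul (Lloc ^ 2 / b)).const_mul G⁻¹)).const_mul
    (μc.real {false})
  calc _ = ∫ ω, ∫ z, ‖G⁻¹ • ∑ i, ht1 i (ω, z) - gradient f (xt1 ω)‖ ^ 2
        ∂μc.prod (Measure.pi νb) ∂μ₀ := integral_prod _ hint1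
    _ ≤ _ := integral_mono_of_nonneg
        (ae_of_all _ fun ω => integral_nonneg fun z => by positivity) hbound (ae_of_all _ hstep)
    _ = _ := by
      rw [integral_const_mul, integral_add hint2 ((hint3.const_mul _).const_mul _),
        integral_const_mul, integral_const_mul, hfalse]
      ring

/-- Recursion for the mean shift error in Byz-DASHA-PAGE. -/
theorem mean_shift_error_recursion_byz_dasha_page
    {d : ℕ} {ι : Type*} [Fintype ι]
    -- local loss functions and their average
    (fS : ι → EuclideanSpace ℝ (Fin d) → ℝ)
    (f : EuclideanSpace ℝ (Fin d) → ℝ)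
    (hf : ∀ x, f x = (1 / (Fintype.card ι : ℝ)) * ∑ i, fS i x)
    (hdiff : ∀ i, Differentiable ℝ (fS i))
    -- probability of full-gradient synchronization
    (p : ℝ) (hp0 : 0 < p) (hp1 : p ≤ 1)
    -- past randomness
    {Ω₀ : Type*} [MeasurableSpace Ω₀] (μ₀ : Measure Ω₀) [IsProbabilityMeasure μ₀]
    -- coin randomness (the same coin for all workers)
    (μc : Measure Bool) [IsProbabilityMeasure μc]
    (hcoin : μc {true} = ENNReal.ofReal p)
    -- mini-batch estimator randomness (independent across workers)
    {Ωb : ι → Type*} [∀ i, MeasurableSpace (Ωb i)]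
    (νb : ∀ i, Measure (Ωb i)) [∀ i, IsProbabilityMeasure (νb i)]
    -- mini-batch estimators: conditionally unbiased, local Hessian variance with batch size b
    (Dhat : (i : ι) → EuclideanSpace ℝ (Fin d) → EuclideanSpace ℝ (Fin d) →
      Ωb i → EuclideanSpace ℝ (Fin d))
    (hDmeas : ∀ i, Measurable fun q :
        (EuclideanSpace ℝ (Fin d) × EuclideanSpace ℝ (Fin d)) × Ωb i =>
        Dhat i q.1.1 q.1.2 q.2)
    (hDint : ∀ i x y, Integrable (fun wb => Dhat i x y wb) (νb i))
    (hDint2 : ∀ i x y, Integrable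
      (fun wb => ‖Dhat i x y wb - (gradient (fS i) x - gradient (fS i) y)‖ ^ 2) (νb i))
    (hDunbiased : ∀ i x y,
      ∫ wb, Dhat i x y wb ∂(νb i) = gradient (fS i) x - gradient (fS i) y)
    (b Lloc : ℝ) (hb : 0 < b) (hLloc : 0 ≤ Lloc)
    (hlocal : ∀ x y, (1 / (Fintype.card ι : ℝ)) *
        ∑ i, ∫ wb, ‖Dhat i x y wb - (gradient (fS i) x - gradient (fS i) y)‖ ^ 2 ∂(νb i)
      ≤ (Lloc ^ 2 / b) * ‖x - y‖ ^ 2)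
    -- current iterates and shifts (measurable with respect to the past)
    (xt xt1 : Ω₀ → EuclideanSpace ℝ (Fin d))
    (ht : ι → Ω₀ → EuclideanSpace ℝ (Fin d))
    (hxtm : Measurable xt) (hxt1m : Measurable xt1) (hhtm : ∀ i, Measurable (ht i))
    -- the new shifts: with probability p set to the full gradient,
    -- otherwise add a stochastic gradient difference
    (ht1 : ι → Ω₀ × Bool × (∀ i, Ωb i) → EuclideanSpace ℝ (Fin d))
    (hht1 : ∀ i w, ht1 i w =
      if w.2.1 then gradient (fS i) (xt1 w.1)
      else ht i w.1 + Dhat i (xt1 w.1) (xt w.1) (w.2.2 i))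
    -- integrability of the relevant squared norms
    (hint1 : Integrable
      (fun w : Ω₀ × Bool × (∀ i, Ωb i) =>
        ‖(Fintype.card ι : ℝ)⁻¹ • ∑ i, ht1 i w - gradient f (xt1 w.1)‖ ^ 2)
      (μ₀.prod (μc.prod (Measure.pi νb))))
    (hint2 : Integrable
      (fun ω₀ => ‖(Fintype.card ι : ℝ)⁻¹ • ∑ i, ht i ω₀ - gradient f (xt ω₀)‖ ^ 2) μ₀)
    (hint3 : Integrable (fun ω₀ => ‖xt1 ω₀ - xt ω₀‖ ^ 2) μ₀) :
    ∫ w, ‖(Fintype.card ι : ℝ)⁻¹ • ∑ i, ht1 i w - gradient f (xt1 w.1)‖ ^ 2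
        ∂(μ₀.prod (μc.prod (Measure.pi νb)))
      ≤ (1 - p) *
          ∫ ω₀, ‖(Fintype.card ι : ℝ)⁻¹ • ∑ i, ht i ω₀ - gradient f (xt ω₀)‖ ^ 2 ∂μ₀
        + ((1 - p) * Lloc ^ 2 / ((Fintype.card ι : ℝ) * b)) *
          ∫ ω₀, ‖xt1 ω₀ - xt ω₀‖ ^ 2 ∂μ₀ :=
  mean_shift_error_recursion_byz_dasha_page_general fS f hf hdiff p hp0 μ₀ μc hcoin νb Dhat hDint
    hDint2 hDunbiased b Lloc hlocal xt xt1 ht ht1 hht1 hint1 hint2 hint3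
end

section
/- (Recursion for the individual shift errors in Byz-DASHA-PAGE.) Suppose h_i^{t+1} = ∇f_i(x^{t+1}) with probability p (same coin for all i) and h_i^{t+1} = h_i^t + Δ̂_i(x^{t+1}, x^t) otherwise, where the Δ̂_i are conditionally unbiased mini-batch estimators with batch size b satisfying the local Hessian variance bound. Then: (1/G) Σ_{i∈𝒢} E‖h_i^{t+1} − ∇f_i(x^{t+1})‖² ≤ (1−p)·(1/G) Σ_{i∈𝒢} E‖h_i^t − ∇f_i(x^t)‖² + ((1−p)𝓛±²/b)·E‖x^{t+1} − x^t‖². -/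
open MeasureTheory Finset

/-!
Fix the past. If the coin shows heads the new shift error is zero. Otherwise it is
`(h_i^t - ∇f_i(x^t)) + (Δ̂_i - (∇f_i(x^{t+1}) - ∇f_i(x^t)))`, a past-measurable vector plus
centred mini-batch noise, so the cross term integrates to zero and its expected squared norm is
`‖h_i^t - ∇f_i(x^t)‖² + Var Δ̂_i`. Averaging over the workers, the local Hessian variance
bound controls the variance by `(𝓛±²/b) ‖x^{t+1} - x^t‖²`; integrating over the past (Fubini)
gives the recursion.
-/

theorem integral_norm_add_sq_of_integral_eq_zero_s10 {E : Type*} [NormedAddCommGroup E]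
    [InnerProductSpace ℝ E] [CompleteSpace E] {Ω : Type*} [MeasurableSpace Ω]
    {ν : Measure Ω} [IsProbabilityMeasure ν] {X : Ω → E} (u : E) (hX : Integrable X ν)
    (hX2 : Integrable (fun w => ‖X w‖ ^ 2) ν) (hmean : ∫ w, X w ∂ν = 0) :
    ∫ w, ‖u + X w‖ ^ 2 ∂ν = ‖u‖ ^ 2 + ∫ w, ‖X w‖ ^ 2 ∂ν := by
  have hcross : Integrable (fun w => 2 * inner ℝ u (X w)) ν := (hX.const_inner u).const_mul 2
  have hfirst : Integrable (fun w => ‖u‖ ^ 2 + 2 * inner ℝ u (X w)) ν :=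
    (integrable_const _).add hcross
  have hcross0 : ∫ w, 2 * inner ℝ u (X w) ∂ν = 0 := by
    rw [integral_const_mul, integral_inner hX, hmean, inner_zero_right, mul_zero]
  simp_rw [norm_add_sq_real u]
  rw [integral_add hfirst hX2, integral_add (integrable_const _) hcross, hcross0,
    integral_const, probReal_univ, one_smul, add_zero]

theorem integral_prod_bool {E : Type*} [NormedAddCommGroup E] [NormedSpace ℝ E] [CompleteSpace E]
    {Ω : Type*} [MeasurableSpace Ω] {ν : Measure Ω} [SFinite ν]
    {μc : Measure Bool} [IsProbabilityMeasure μc] {p : ℝ} (hp0 : 0 ≤ p)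
    (hcoin : μc {true} = ENNReal.ofReal p) {F : Bool × Ω → E}
    (hF : Integrable F (μc.prod ν)) :
    ∫ y, F y ∂(μc.prod ν) = p • ∫ w, F (true, w) ∂ν + (1 - p) • ∫ w, F (false, w) ∂ν := by
  have htrue : μc.real {true} = p := by rw [measureReal_def, hcoin, ENNReal.toReal_ofReal hp0]
  have hfalse : μc.real {false} = 1 - p := by
    rw [← htrue, ← probReal_compl_eq_one_sub (measurableSet_singleton true)]
    congr 1
    ext c
    cases c <;> simp
  rw [integral_prod F hF, integral_fintype hF.integral_prod_left, Fintype.sum_bool, htrue,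
    hfalse]

theorem integral_norm_sq_sub_of_page_update {E : Type*} [NormedAddCommGroup E]
    [InnerProductSpace ℝ E] [CompleteSpace E] {ι : Type*} [Fintype ι]
    {Ωb : ι → Type*} [∀ i, MeasurableSpace (Ωb i)]
    {νb : ∀ i, Measure (Ωb i)} [∀ i, IsProbabilityMeasure (νb i)]
    {μc : Measure Bool} [IsProbabilityMeasure μc] {p : ℝ} (hp0 : 0 ≤ p)
    (hcoin : μc {true} = ENNReal.ofReal p) {i : ι} (h g g' : E) {D : Ωb i → E}
    (hD : Integrable D (νb i)) (hD2 : Integrable (fun z => ‖D z - (g - g')‖ ^ 2) (νb i))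
    (hmean : ∫ z, D z ∂(νb i) = g - g')
    (hint : Integrable (fun y : Bool × (∀ j, Ωb j) =>
      ‖(if y.1 then g else h + D (y.2 i)) - g‖ ^ 2) (μc.prod (Measure.pi νb))) :
    ∫ y, ‖(if y.1 then g else h + D (y.2 i)) - g‖ ^ 2 ∂(μc.prod (Measure.pi νb))
      = (1 - p) * (‖h - g'‖ ^ 2 + ∫ z, ‖D z - (g - g')‖ ^ 2 ∂(νb i)) := by
  have hcentered_int : Integrable (fun z => D z - (g - g')) (νb i) :=
    hD.sub (integrable_const _)
  have hcentered : ∫ z, D z - (g - g') ∂(νb i) = 0 := by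
    rw [integral_sub hD (integrable_const _), hmean, integral_const, probReal_univ, one_smul,
      sub_self]
  have hregroup : ∀ z, h + D z - g = (h - g') + (D z - (g - g')) := fun z => by abel
  rw [integral_prod_bool hp0 hcoin hint]
  simp only [if_true, sub_self, norm_zero, Bool.false_eq_true, if_false, hregroup]
  rw [integral_comp_eval (f := fun z => ‖(h - g') + (D z - (g - g'))‖ ^ 2) (by fun_prop),
    integral_norm_add_sq_of_integral_eq_zero_s10 _ hcentered_int hD2 hcentered]
  simp

theorem local_shift_error_recursion_byz_dasha_page_general
    {d : ℕ} {ι : Type*} [Fintype ι]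
    -- local loss functions and their average
    (fS : ι → EuclideanSpace ℝ (Fin d) → ℝ)
    -- probability of full-gradient synchronization
    (p : ℝ) (hp0 : 0 < p) (hp1 : p ≤ 1)
    -- past randomness
    {Ω₀ : Type*} [MeasurableSpace Ω₀] (μ₀ : Measure Ω₀) [IsProbabilityMeasure μ₀]
    -- coin randomness (the same coin for all workers)
    (μc : Measure Bool) [IsProbabilityMeasure μc]
    (hcoin : μc {true} = ENNReal.ofReal p)
    -- mini-batch estimator randomness (independent across workers)
    {Ωb : ι → Type*} [∀ i, MeasurableSpace (Ωb i)]
    (νb : ∀ i, Measure (Ωb i)) [∀ i, IsProbabilityMeasure (νb i)]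
    -- mini-batch estimators: conditionally unbiased, local Hessian variance with batch size b
    (Dhat : (i : ι) → EuclideanSpace ℝ (Fin d) → EuclideanSpace ℝ (Fin d) →
      Ωb i → EuclideanSpace ℝ (Fin d))
    (hDint : ∀ i x y, Integrable (fun wb => Dhat i x y wb) (νb i))
    (hDint2 : ∀ i x y, Integrable
      (fun wb => ‖Dhat i x y wb - (gradient (fS i) x - gradient (fS i) y)‖ ^ 2) (νb i))
    (hDunbiased : ∀ i x y,
      ∫ wb, Dhat i x y wb ∂(νb i) = gradient (fS i) x - gradient (fS i) y)
    (b Lloc : ℝ)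
    (hlocal : ∀ x y, (1 / (Fintype.card ι : ℝ)) *
        ∑ i, ∫ wb, ‖Dhat i x y wb - (gradient (fS i) x - gradient (fS i) y)‖ ^ 2 ∂(νb i)
      ≤ (Lloc ^ 2 / b) * ‖x - y‖ ^ 2)
    -- current iterates and shifts (measurable with respect to the past)
    (xt xt1 : Ω₀ → EuclideanSpace ℝ (Fin d))
    (ht : ι → Ω₀ → EuclideanSpace ℝ (Fin d))
    -- the new shifts: with probability p set to the full gradient,
    -- otherwise add a stochastic gradient difference
    (ht1 : ι → Ω₀ × Bool × (∀ i, Ωb i) → EuclideanSpace ℝ (Fin d))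
    (hht1 : ∀ i w, ht1 i w =
      if w.2.1 then gradient (fS i) (xt1 w.1)
      else ht i w.1 + Dhat i (xt1 w.1) (xt w.1) (w.2.2 i))
    -- integrability of the relevant squared norms
    (hint1 : ∀ i, Integrable
      (fun w : Ω₀ × Bool × (∀ i, Ωb i) =>
        ‖ht1 i w - gradient (fS i) (xt1 w.1)‖ ^ 2)
      (μ₀.prod (μc.prod (Measure.pi νb))))
    (hint2 : ∀ i, Integrable
      (fun ω₀ => ‖ht i ω₀ - gradient (fS i) (xt ω₀)‖ ^ 2) μ₀)
    (hint3 : Integrable (fun ω₀ => ‖xt1 ω₀ - xt ω₀‖ ^ 2) μ₀) :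
    (1 / (Fintype.card ι : ℝ)) *
        ∑ i, ∫ w, ‖ht1 i w - gradient (fS i) (xt1 w.1)‖ ^ 2
          ∂(μ₀.prod (μc.prod (Measure.pi νb)))
      ≤ (1 - p) * ((1 / (Fintype.card ι : ℝ)) *
            ∑ i, ∫ ω₀, ‖ht i ω₀ - gradient (fS i) (xt ω₀)‖ ^ 2 ∂μ₀)
        + ((1 - p) * Lloc ^ 2 / b) *
          ∫ ω₀, ‖xt1 ω₀ - xt ω₀‖ ^ 2 ∂μ₀ := by
  set G : ℝ := (Fintype.card ι : ℝ)
  set ν := μc.prod (Measure.pi νb)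
  set err : ι → Ω₀ → ℝ := fun i ω₀ => ‖ht i ω₀ - gradient (fS i) (xt ω₀)‖ ^ 2
  have hstep : ∀ i, ∀ᵐ ω₀ ∂μ₀,
      ∫ y, ‖ht1 i (ω₀, y) - gradient (fS i) (xt1 ω₀)‖ ^ 2 ∂ν = (1 - p) * (err i ω₀ +
        ∫ z, ‖Dhat i (xt1 ω₀) (xt ω₀) z -
          (gradient (fS i) (xt1 ω₀) - gradient (fS i) (xt ω₀))‖ ^ 2 ∂(νb i)) := by
    intro i
    filter_upwards [(hint1 i).prod_right_ae] with ω₀ hsection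
    simp only [hht1] at hsection ⊢
    exact integral_norm_sq_sub_of_page_update hp0.le hcoin _ _ _ (hDint i _ _) (hDint2 i _ _)
      (hDunbiased i _ _) hsection
  have hpointwise : (fun ω₀ => (1 / G) * ∑ i,
        ∫ y, ‖ht1 i (ω₀, y) - gradient (fS i) (xt1 ω₀)‖ ^ 2 ∂ν)
      ≤ᵐ[μ₀] fun ω₀ => (1 - p) * ((1 / G) * ∑ i, err i ω₀)
        + ((1 - p) * Lloc ^ 2 / b) * ‖xt1 ω₀ - xt ω₀‖ ^ 2 := by
    filter_upwards [ae_all_iff.mpr hstep] with ω₀ hω₀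
    have hvariance := mul_le_mul_of_nonneg_left (hlocal (xt1 ω₀) (xt ω₀)) (sub_nonneg.2 hp1)
    rw [sum_congr rfl fun i _ => hω₀ i, ← mul_sum, sum_add_distrib]
    linear_combination hvariance
  have hsum_err : Integrable (fun ω₀ => ∑ i, err i ω₀) μ₀ :=
    integrable_finsetSum _ fun i _ => hint2 i
  calc (1 / G) * ∑ i, ∫ w, ‖ht1 i w - gradient (fS i) (xt1 w.1)‖ ^ 2 ∂(μ₀.prod ν)
      = ∫ ω₀, (1 / G) * ∑ i, ∫ y, ‖ht1 i (ω₀, y) - gradient (fS i) (xt1 ω₀)‖ ^ 2 ∂ν ∂μ₀ := by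
        rw [integral_const_mul, integral_finsetSum _ fun i _ => (hint1 i).integral_prod_left]
        simp only [integral_prod _ (hint1 _)]
    _ ≤ ∫ ω₀, (1 - p) * ((1 / G) * ∑ i, err i ω₀)
          + ((1 - p) * Lloc ^ 2 / b) * ‖xt1 ω₀ - xt ω₀‖ ^ 2 ∂μ₀ :=
        integral_mono_ae
          ((integrable_finsetSum _ fun i _ => (hint1 i).integral_prod_left).const_mul _)
          (((hsum_err.const_mul _).const_mul _).add (hint3.const_mul _)) hpointwise
    _ = _ := by
        rw [integral_add ((hsum_err.const_mul _).const_mul _) (hint3.const_mul _),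
          integral_const_mul, integral_const_mul, integral_const_mul,
          integral_finsetSum _ fun i _ => hint2 i]

/-- Recursion for the individual shift errors in Byz-DASHA-PAGE. -/
theorem local_shift_error_recursion_byz_dasha_page
    {d : ℕ} {ι : Type*} [Fintype ι]
    -- local loss functions and their average
    (fS : ι → EuclideanSpace ℝ (Fin d) → ℝ)
    (f : EuclideanSpace ℝ (Fin d) → ℝ)
    (hf : ∀ x, f x = (1 / (Fintype.card ι : ℝ)) * ∑ i, fS i x)
    (hdiff : ∀ i, Differentiable ℝ (fS i))
    -- probability of full-gradient synchronization
    (p : ℝ) (hp0 : 0 < p) (hp1 : p ≤ 1)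
    -- past randomness
    {Ω₀ : Type*} [MeasurableSpace Ω₀] (μ₀ : Measure Ω₀) [IsProbabilityMeasure μ₀]
    -- coin randomness (the same coin for all workers)
    (μc : Measure Bool) [IsProbabilityMeasure μc]
    (hcoin : μc {true} = ENNReal.ofReal p)
    -- mini-batch estimator randomness (independent across workers)
    {Ωb : ι → Type*} [∀ i, MeasurableSpace (Ωb i)]
    (νb : ∀ i, Measure (Ωb i)) [∀ i, IsProbabilityMeasure (νb i)]
    -- mini-batch estimators: conditionally unbiased, local Hessian variance with batch size b
    (Dhat : (i : ι) → EuclideanSpace ℝ (Fin d) → EuclideanSpace ℝ (Fin d) →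
      Ωb i → EuclideanSpace ℝ (Fin d))
    (hDmeas : ∀ i, Measurable fun q :
        (EuclideanSpace ℝ (Fin d) × EuclideanSpace ℝ (Fin d)) × Ωb i =>
        Dhat i q.1.1 q.1.2 q.2)
    (hDint : ∀ i x y, Integrable (fun wb => Dhat i x y wb) (νb i))
    (hDint2 : ∀ i x y, Integrable
      (fun wb => ‖Dhat i x y wb - (gradient (fS i) x - gradient (fS i) y)‖ ^ 2) (νb i))
    (hDunbiased : ∀ i x y,
      ∫ wb, Dhat i x y wb ∂(νb i) = gradient (fS i) x - gradient (fS i) y)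
    (b Lloc : ℝ) (hb : 0 < b) (hLloc : 0 ≤ Lloc)
    (hlocal : ∀ x y, (1 / (Fintype.card ι : ℝ)) *
        ∑ i, ∫ wb, ‖Dhat i x y wb - (gradient (fS i) x - gradient (fS i) y)‖ ^ 2 ∂(νb i)
      ≤ (Lloc ^ 2 / b) * ‖x - y‖ ^ 2)
    -- current iterates and shifts (measurable with respect to the past)
    (xt xt1 : Ω₀ → EuclideanSpace ℝ (Fin d))
    (ht : ι → Ω₀ → EuclideanSpace ℝ (Fin d))
    (hxtm : Measurable xt) (hxt1m : Measurable xt1) (hhtm : ∀ i, Measurable (ht i))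
    -- the new shifts: with probability p set to the full gradient,
    -- otherwise add a stochastic gradient difference
    (ht1 : ι → Ω₀ × Bool × (∀ i, Ωb i) → EuclideanSpace ℝ (Fin d))
    (hht1 : ∀ i w, ht1 i w =
      if w.2.1 then gradient (fS i) (xt1 w.1)
      else ht i w.1 + Dhat i (xt1 w.1) (xt w.1) (w.2.2 i))
    -- integrability of the relevant squared norms
    (hint1 : ∀ i, Integrable
      (fun w : Ω₀ × Bool × (∀ i, Ωb i) =>
        ‖ht1 i w - gradient (fS i) (xt1 w.1)‖ ^ 2)
      (μ₀.prod (μc.prod (Measure.pi νb))))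
    (hint2 : ∀ i, Integrable
      (fun ω₀ => ‖ht i ω₀ - gradient (fS i) (xt ω₀)‖ ^ 2) μ₀)
    (hint3 : Integrable (fun ω₀ => ‖xt1 ω₀ - xt ω₀‖ ^ 2) μ₀) :
    (1 / (Fintype.card ι : ℝ)) *
        ∑ i, ∫ w, ‖ht1 i w - gradient (fS i) (xt1 w.1)‖ ^ 2
          ∂(μ₀.prod (μc.prod (Measure.pi νb)))
      ≤ (1 - p) * ((1 / (Fintype.card ι : ℝ)) *
            ∑ i, ∫ ω₀, ‖ht i ω₀ - gradient (fS i) (xt ω₀)‖ ^ 2 ∂μ₀)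
        + ((1 - p) * Lloc ^ 2 / b) *
          ∫ ω₀, ‖xt1 ω₀ - xt ω₀‖ ^ 2 ∂μ₀ :=
  local_shift_error_recursion_byz_dasha_page_general fS p hp0 hp1 μ₀ μc hcoin νb Dhat hDint hDint2
    hDunbiased b Lloc hlocal xt xt1 ht ht1 hht1 hint1 hint2 hint3
end
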